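/- arXiv:1703.10586 — 13 statements merged into one kernel-verified Lean document; each statement's English description precedes it below -/
import Mathlib

section
/- Let P be a rooted tree poset (unique minimal element, Hasse diagram a tree). Define the linear map T : ℝ^P → ℝ^P by (Tf)(b) = f(b) - f(b̄), where b̄ is the unique element of P̂ covered-below b (with f(0̂) = 0). Then T maps Lip(P) bijectively onto the unit cube [0,1]^P. -/
/-!
The map `T` is linear, and it is injective because `f b = T f b + f (par b)` recovers `f` from `T f`
by well-founded recursion towards the root; on the finite-dimensional space `ℝ^P` it is therefore
bijective. In a rooted tree every cover relation of `P̂` has the form `par b ⋖ b`, so the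
inequalities defining `Lip P` are exactly `0 ≤ T f b ≤ 1`, one for each `b`: `Lip P` is the
preimage of the unit cube under `T`.
-/

/-- The Lipschitz polytope of a finite poset `α`. -/
def Lip (α : Type*) [PartialOrder α] : Set (α → ℝ) :=
  {f | (∀ a, IsMin a → 0 ≤ f a ∧ f a ≤ 1) ∧
       ∀ a b : α, a ⋖ b → 0 ≤ f b - f a ∧ f b - f a ≤ 1}

open Function

section TreeDiff

variable {α : Type*} {par : α → WithBot α}

/-- The map `T`; `WithBot.recBotCoe 0 f` is `f` extended to `P̂` by `f 0̂ = 0`. -/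
def treeDiff (par : α → WithBot α) : (α → ℝ) →ₗ[ℝ] (α → ℝ) where
  toFun f b := f b - WithBot.recBotCoe 0 f (par b)
  map_add' f g := by
    funext b
    dsimp only [Pi.add_apply]
    cases par b using WithBot.recBotCoe <;>
      simp only [WithBot.recBotCoe_bot, WithBot.recBotCoe_coe, Pi.add_apply] <;> ring
  map_smul' c f := by
    funext b
    dsimp only [Pi.smul_apply]
    cases par b using WithBot.recBotCoe <;>
      simp only [WithBot.recBotCoe_bot, WithBot.recBotCoe_coe, Pi.smul_apply, smul_eq_mul,
        RingHom.id_apply] <;> ring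

lemma treeDiff_apply_of_par_eq_bot {b : α} (hb : par b = ⊥) (f : α → ℝ) :
    treeDiff par f b = f b := by
  simp [treeDiff, hb]

lemma treeDiff_apply_of_par_eq_coe {a b : α} (hb : par b = a) (f : α → ℝ) :
    treeDiff par f b = f b - f a := by
  simp [treeDiff, hb]

variable [PartialOrder α]

theorem treeDiff_injective [WellFoundedLT α] (hpar : ∀ b : α, par b < b) :
    Injective (treeDiff par) := by
  rw [← LinearMap.ker_eq_bot, LinearMap.ker_eq_bot']
  intro f hf
  funext b
  induction b using WellFoundedLT.induction with
  | ind b ih =>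
    have hfb := congrFun hf b
    cases h : par b using WithBot.recBotCoe with
    | bot => simpa [treeDiff_apply_of_par_eq_bot h] using hfb
    | coe a =>
      have hab : a < b := WithBot.coe_lt_coe.mp (h ▸ hpar b)
      simpa [treeDiff_apply_of_par_eq_coe h, ih a hab] using hfb

theorem treeDiff_bijective [Finite α] (hpar : ∀ b : α, par b < b) :
    Bijective (treeDiff par) :=
  ⟨treeDiff_injective hpar, LinearMap.injective_iff_surjective.mp (treeDiff_injective hpar)⟩

theorem mem_Lip_iff_treeDiff_mem_unitCube (hpar : ∀ b : α, par b ⋖ b)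
    (huniq : ∀ (b : α) (a : WithBot α), a ⋖ b → a = par b) (f : α → ℝ) :
    f ∈ Lip α ↔ ∀ b, 0 ≤ treeDiff par f b ∧ treeDiff par f b ≤ 1 := by
  constructor
  · rintro ⟨hmin, hcov⟩ b
    cases h : par b using WithBot.recBotCoe with
    | bot =>
      have hb : IsMin b := WithBot.bot_covBy_coe.mp (h ▸ hpar b)
      simpa [treeDiff_apply_of_par_eq_bot h] using hmin b hb
    | coe a =>
      have hab : a ⋖ b := WithBot.coe_covBy_coe.mp (h ▸ hpar b)
      simpa [treeDiff_apply_of_par_eq_coe h] using hcov a b hab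
  · intro hT
    refine ⟨fun a ha => ?_, fun a b hab => ?_⟩
    · have hpa := (huniq a ⊥ (WithBot.bot_covBy_coe.mpr ha)).symm
      simpa [treeDiff_apply_of_par_eq_bot hpa] using hT a
    · have hpb := (huniq b a (WithBot.coe_covBy_coe.mpr hab)).symm
      simpa [treeDiff_apply_of_par_eq_coe hpb] using hT b

end TreeDiff

theorem lip_of_rooted_tree_general {α : Type*} [PartialOrder α] [Fintype α]
    (par : α → WithBot α)
    (hpar : ∀ b : α, par b ⋖ (b : WithBot α))
    (huniq : ∀ (b : α) (a : WithBot α), a ⋖ (b : WithBot α) → a = par b) :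
    Set.BijOn (fun (f : α → ℝ) (b : α) => f b - WithBot.recBotCoe 0 f (par b))
      (Lip α) {g : α → ℝ | ∀ a, 0 ≤ g a ∧ g a ≤ 1} := by
  have hLip : Lip α = treeDiff par ⁻¹' {g | ∀ a, 0 ≤ g a ∧ g a ≤ 1} :=
    Set.ext (mem_Lip_iff_treeDiff_mem_unitCube hpar huniq)
  rw [hLip]
  exact (treeDiff_bijective fun b => (hpar b).lt).bijOn_preimage

/-- For a rooted tree `P` (unique minimal element, and every `b ∈ P` has a unique
element `par b` of `P̂ = WithBot P` covered-below it), the linear map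
`T f b = f b - f(par b)` (with `f ⊥ = 0`) maps `Lip(P)` bijectively onto `[0,1]^P`. -/
theorem lip_of_rooted_tree {α : Type*} [PartialOrder α] [Fintype α]
    (hroot : ∃! a : α, IsMin a)
    (par : α → WithBot α)
    (hpar : ∀ b : α, par b ⋖ (b : WithBot α))
    (huniq : ∀ (b : α) (a : WithBot α), a ⋖ (b : WithBot α) → a = par b) :
    Set.BijOn (fun (f : α → ℝ) (b : α) => f b - WithBot.recBotCoe 0 f (par b))
      (Lip α) {g : α → ℝ | ∀ a, 0 ≤ g a ∧ g a ≤ 1} :=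
  lip_of_rooted_tree_general par hpar huniq
end

section
/- Every integer point of Lip(P) is of the form 1_{F_m} + ... + 1_{F_1} for a unique neighbor-closed chain of nonempty filters F_m ⊂ ... ⊂ F_1 ⊆ P, and conversely every such sum lies in Lip(P). -/
/-- `F : Fin m → Finset α` is a neighbor-closed chain `F 0 ⊃ F 1 ⊃ ⋯` of nonempty
filters: it is a strictly decreasing chain of nonempty upward-closed sets, and for
consecutive members, `a ∉ F i` implies `b ∉ F (i+1)` for covers `a ⋖ b` in `P̂`
(equivalently `F (i+1) ∪ N(F (i+1)) ⊆ F i`; the cover `0̂ ⋖ b` for minimal `b`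
forces non-initial members to contain no minimal element of `P`). -/
def IsNCChain {α : Type*} [PartialOrder α] (m : ℕ) (F : Fin m → Finset α) : Prop :=
  (∀ i, (F i).Nonempty) ∧
  (∀ i, ∀ a b : α, a ≤ b → a ∈ F i → b ∈ F i) ∧
  (∀ i j : Fin m, i < j → F j ⊂ F i) ∧
  (∀ i j : Fin m, (i : ℕ) + 1 = (j : ℕ) →
    ∀ a b : α, a ⋖ b → a ∉ F i → b ∉ F j) ∧
  (∀ i j : Fin m, (i : ℕ) + 1 = (j : ℕ) → ∀ b : α, IsMin b → b ∉ F j)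

/-!
An integer point `f` of `Lip(P)` is monotone and nonnegative, hence `ℕ`-valued, and it is the
sum of the indicators of its superlevel sets `{f > i}`, `i < max f`. The Lipschitz conditions on
covers and on minimal elements translate exactly into neighbor-closedness, and since `f` rises
by at most one along a cover chain starting at a minimal element, every level `1, …, max f` is
attained, so the superlevel sets are nonempty and strictly decreasing. Conversely, a decreasing
chain is recovered from its sum of indicators: the members containing `a` are the first
`f a` ones.
-/

open Finset Relation

theorem exists_isMin_le {α : Type*} [Preorder α] [WellFoundedLT α] (a : α) :
    ∃ b ≤ a, IsMin b := by
  obtain ⟨b, hba, hb⟩ := exists_minimal_le_of_wellFoundedLT (fun _ => True) a trivial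
  exact ⟨b, hba, minimal_true.1 hb⟩

theorem Relation.ReflTransGen.exists_apply_eq {β : Type*} {r : β → β → Prop} {N : β → ℕ}
    (hN : ∀ x y, r x y → N y ≤ N x + 1) {a b : β} (h : ReflTransGen r a b) {k : ℕ}
    (hak : N a ≤ k) (hkb : k ≤ N b) : ∃ c, N c = k := by
  induction h with
  | refl => exact ⟨a, by omega⟩
  | @tail x y _ hxy ih =>
    by_cases hkx : k ≤ N x
    · exact ih hkx
    · exact ⟨y, by have := hN x y hxy; omega⟩

section Lip

variable {α : Type*} [PartialOrder α]

theorem natCast_mem_lip_iff {N : α → ℕ} :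
    (fun a => (N a : ℝ)) ∈ Lip α ↔
      (∀ a, IsMin a → N a ≤ 1) ∧ ∀ a b : α, a ⋖ b → N a ≤ N b ∧ N b ≤ N a + 1 := by
  simp only [Lip, Set.mem_ofPred_eq, Nat.cast_nonneg, true_and, sub_nonneg,
    sub_le_iff_le_add']
  norm_cast

variable [LocallyFiniteOrder α]

theorem monotone_of_mem_lip {f : α → ℝ} (hf : f ∈ Lip α) : Monotone f :=
  (monotone_iff_forall_covBy f).2 fun a b hab => sub_nonneg.1 (hf.2 a b hab).1

theorem nonneg_of_mem_lip [WellFoundedLT α] {f : α → ℝ} (hf : f ∈ Lip α) (a : α) : 0 ≤ f a := by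
  obtain ⟨b, hba, hb⟩ := exists_isMin_le a
  exact (hf.1 b hb).1.trans (monotone_of_mem_lip hf hba)

theorem exists_eq_natCast_of_mem_lip [WellFoundedLT α] {f : α → ℝ} (hf : f ∈ Lip α)
    (hz : ∀ a, ∃ z : ℤ, f a = z) : ∃ N : α → ℕ, f = fun a => (N a : ℝ) := by
  choose z hz using hz
  refine ⟨fun a => (z a).toNat, funext fun a => ?_⟩
  have : 0 ≤ z a := by exact_mod_cast hz a ▸ nonneg_of_mem_lip hf a
  rw [hz a, ← Int.toNat_of_nonneg this, Int.cast_natCast]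

theorem exists_apply_eq_of_natCast_mem_lip [WellFoundedLT α] {N : α → ℕ}
    (hN : (fun a => (N a : ℝ)) ∈ Lip α) {k : ℕ} (hk : 1 ≤ k) {b : α} (hkb : k ≤ N b) :
    ∃ c, N c = k := by
  obtain ⟨hmin, hcov⟩ := natCast_mem_lip_iff.1 hN
  obtain ⟨a, hab, ha⟩ := exists_isMin_le b
  exact (le_iff_reflTransGen_covBy.1 hab).exists_apply_eq (fun x y h => (hcov x y h).2)
    ((hmin a ha).trans hk) hkb

end Lip

section Chain

variable {α : Type*}

/-- The value at `a` of `1_{F 0} + ⋯ + 1_{F (m-1)}`. -/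
def countMem [DecidableEq α] {m : ℕ} (F : Fin m → Finset α) (a : α) : ℕ := #{i | a ∈ F i}

theorem countMem_le [DecidableEq α] {m : ℕ} (F : Fin m → Finset α) (a : α) : countMem F a ≤ m :=
  (card_le_univ _).trans_eq (Fintype.card_fin m)

namespace IsNCChain

variable [PartialOrder α] {m : ℕ} {F : Fin m → Finset α}

theorem antitone (hF : IsNCChain m F) : Antitone F := fun i j hij =>
  hij.eq_or_lt.elim (fun h => h ▸ le_rfl) fun h => (hF.2.2.1 i j h).subset

variable [DecidableEq α]

theorem mem_iff_lt_countMem (hF : IsNCChain m F) {a : α} {i : Fin m} :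
    a ∈ F i ↔ (i : ℕ) < countMem F a :=
  (Fin.lt_card_filter_univ_iff_apply_of_imp _ fun _ _ hji ha => hF.antitone hji ha).symm

theorem natCast_countMem_mem_lip (hF : IsNCChain m F) :
    (fun a => (countMem F a : ℝ)) ∈ Lip α := by
  obtain ⟨-, hup, -, hnb, hmin⟩ := id hF
  refine natCast_mem_lip_iff.2 ⟨fun a ha => ?_, fun a b hab => ⟨?_, ?_⟩⟩
  · by_contra! h
    have := countMem_le F a
    exact hmin ⟨0, by omega⟩ ⟨1, by omega⟩ rfl a ha (hF.mem_iff_lt_countMem.2 h)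
  · exact card_le_card fun i => by simpa using hup i a b hab.le
  · by_contra! h
    have := countMem_le F b
    exact hnb ⟨countMem F a, by omega⟩ ⟨countMem F a + 1, by omega⟩ rfl a b hab
      (by simp [hF.mem_iff_lt_countMem]) (hF.mem_iff_lt_countMem.2 h)

end IsNCChain

end Chain

section Superlevel

variable {α : Type*} [Fintype α]

def superlevelChain (N : α → ℕ) : Σ m : ℕ, Fin m → Finset α :=
  ⟨univ.sup N, fun i => {a | (i : ℕ) < N a}⟩

theorem countMem_superlevelChain [DecidableEq α] (N : α → ℕ) (a : α) :
    countMem (superlevelChain N).2 a = N a := by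
  simp only [countMem, superlevelChain, mem_filter, mem_univ, true_and]
  exact Fin.card_filter_val_lt.trans (min_eq_right (le_sup (mem_univ a)))

variable [PartialOrder α]

theorem isNCChain_superlevelChain [LocallyFiniteOrder α] {N : α → ℕ}
    (hN : (fun a => (N a : ℝ)) ∈ Lip α) : IsNCChain _ (superlevelChain N).2 := by
  obtain ⟨hmin, hcov⟩ := natCast_mem_lip_iff.1 hN
  have hmono : Monotone N := (monotone_iff_forall_covBy N).2 fun a b h => (hcov a b h).1
  have hreach (i : Fin (univ.sup N)) : ∃ c, N c = i + 1 := by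
    obtain ⟨b, -, hb⟩ := Finset.lt_sup_iff.1 i.isLt
    exact exists_apply_eq_of_natCast_mem_lip hN (by omega) hb
  simp only [IsNCChain, superlevelChain, mem_filter, mem_univ, true_and]
  refine ⟨fun i => ?_, fun i a b hab ha => ha.trans_le (hmono hab), fun i j hij => ?_,
    fun i j hij a b hab ha => ?_, fun i j hij b hb => ?_⟩
  · obtain ⟨c, hc⟩ := hreach i
    exact ⟨c, by simp [hc]⟩
  · have hij' : (i : ℕ) < j := hij
    obtain ⟨c, hc⟩ := hreach i
    refine (ssubset_iff_of_subset fun a => ?_).2 ⟨c, ?_, ?_⟩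
    · simp only [mem_filter, mem_univ, true_and]
      omega
    · simp [hc]
    · simp only [mem_filter, mem_univ, true_and, hc]
      omega
  · have := (hcov a b hab).2
    omega
  · have := hmin b hb
    omega

theorem IsNCChain.eq_superlevelChain [DecidableEq α] {m : ℕ} {F : Fin m → Finset α}
    (hF : IsNCChain m F) :
    (⟨m, F⟩ : Σ m : ℕ, Fin m → Finset α) = superlevelChain (countMem F) := by
  have hm : m = univ.sup (countMem F) := by
    refine le_antisymm ?_ (Finset.sup_le fun a _ => countMem_le F a)
    cases m with
    | zero => exact Nat.zero_le _
    | succ n =>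
      obtain ⟨a, ha⟩ := hF.1 (Fin.last n)
      exact (hF.mem_iff_lt_countMem.1 ha).trans_le (le_sup (mem_univ a))
  refine Sigma.ext hm ((Fin.heq_fun_iff hm).2 fun i => ?_)
  ext a
  simp [superlevelChain, hF.mem_iff_lt_countMem]

end Superlevel

/-- A point `f ∈ ℝ^P` is an integer point of `Lip(P)` if and only if
`f = 1_{F m} + ⋯ + 1_{F 1}` for a unique neighbor-closed chain of nonempty
filters; i.e. `f a` counts the members of the chain containing `a`. -/
theorem lip_integer_points {α : Type*} [PartialOrder α] [Fintype α] [DecidableEq α]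
    (f : α → ℝ) :
    (f ∈ Lip α ∧ ∀ a, ∃ z : ℤ, f a = (z : ℝ)) ↔
      ∃! C : Σ m : ℕ, Fin m → Finset α,
        IsNCChain C.1 C.2 ∧
        ∀ a : α, f a = ((Finset.univ.filter fun i : Fin C.1 => a ∈ C.2 i).card : ℝ) := by
  classical
  let := Fintype.toLocallyFiniteOrder (α := α)
  constructor
  · rintro ⟨hf, hz⟩
    obtain ⟨N, rfl⟩ := exists_eq_natCast_of_mem_lip hf hz
    refine ⟨superlevelChain N, ⟨isNCChain_superlevelChain hf, fun a => ?_⟩, ?_⟩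
    · exact congrArg Nat.cast (countMem_superlevelChain N a).symm
    rintro ⟨m, F⟩ ⟨hF, hNF⟩
    have : countMem F = N := funext fun a => Nat.cast_injective (hNF a).symm
    rw [hF.eq_superlevelChain, this]
  · rintro ⟨⟨m, F⟩, ⟨hF, hfF⟩, -⟩
    obtain rfl : f = fun a => (countMem F a : ℝ) := funext hfF
    exact ⟨hF.natCast_countMem_mem_lip, fun a => ⟨countMem F a, by simp⟩⟩
end

section
/- Every integer point of Lip(P) is a vertex of Lip(P), i.e., for each integer point f there is a linear functional uniquely maximized on Lip(P) at f. -/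
/-!
Each defining inequality of `Lip(P)` has the form `0 ≤ ℓ g ≤ 1` for a linear form `ℓ` with
integer coefficients, so at an integer point `f` every `ℓ f` is `0` or `1`. The functional
`∑ (2 ℓ f - 1) ℓ` is then maximized on the box `0 ≤ ℓ ≤ 1` exactly where every `ℓ` agrees with
`ℓ f`; and a function on a finite poset is determined by its values at the minimal elements
together with its increments along covers.
-/

open Set

lemma two_mul_sub_one_mul_le {x y : ℝ} (hx : x ∈ Icc 0 1) (hy : y = 0 ∨ y = 1) :
    (2 * y - 1) * x ≤ (2 * y - 1) * y := by
  obtain ⟨hx0, hx1⟩ := hx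
  rcases hy with rfl | rfl <;> linarith

lemma two_mul_sub_one_mul_lt {x y : ℝ} (hx : x ∈ Icc 0 1) (hy : y = 0 ∨ y = 1) (hxy : x ≠ y) :
    (2 * y - 1) * x < (2 * y - 1) * y := by
  obtain ⟨hx0, hx1⟩ := hx
  rcases hy with rfl | rfl
  · linarith [lt_of_le_of_ne hx0 (Ne.symm hxy)]
  · linarith [lt_of_le_of_ne hx1 hxy]

theorem exists_linearMap_lt_of_forall_eq_zero_or_eq_one {V ι : Type*} [AddCommGroup V]
    [Module ℝ V] [Finite ι] (ℓ : ι → V →ₗ[ℝ] ℝ) {f : V} (hf : ∀ i, ℓ i f = 0 ∨ ℓ i f = 1) :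
    ∃ c : V →ₗ[ℝ] ℝ, ∀ g, (∀ i, ℓ i g ∈ Icc 0 1) → (∃ i, ℓ i g ≠ ℓ i f) → c g < c f := by
  have := Fintype.ofFinite ι
  refine ⟨∑ i, (2 * ℓ i f - 1) • ℓ i, fun g hg ⟨i, hi⟩ => ?_⟩
  simp only [LinearMap.sum_apply, LinearMap.smul_apply, smul_eq_mul]
  exact Finset.sum_lt_sum (fun j _ => two_mul_sub_one_mul_le (hg j) (hf j))
    ⟨i, Finset.mem_univ i, two_mul_sub_one_mul_lt (hg i) (hf i) hi⟩

lemma Int.cast_eq_zero_or_eq_one_of_mem_Icc {z : ℤ} (hz : (z : ℝ) ∈ Icc 0 1) :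
    (z : ℝ) = 0 ∨ (z : ℝ) = 1 := by
  obtain ⟨h0, h1⟩ := hz
  have h0' : 0 ≤ z := by exact_mod_cast h0
  have h1' : z ≤ 1 := by exact_mod_cast h1
  interval_cases z <;> simp

lemma eq_of_eq_on_isMin_of_sub_eq_on_covBy {α β : Type*} [PartialOrder α] [Finite α]
    [AddGroup β] {f g : α → β} (hmin : ∀ a, IsMin a → g a = f a)
    (hcov : ∀ a b, a ⋖ b → g b - g a = f b - f a) : g = f := by
  funext a
  induction a using WellFoundedLT.induction with
  | _ a ih =>
    by_cases ha : IsMin a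
    · exact hmin a ha
    · obtain ⟨b, hba⟩ := exists_covBy_of_wellFoundedGT ha
      simpa [ih b hba.lt] using hcov b a hba

section LipConstraint

variable (α : Type*) [PartialOrder α]

def LipConstraint : Type _ := {a : α // IsMin a} ⊕ {p : α × α // p.1 ⋖ p.2}

instance [Finite α] : Finite (LipConstraint α) := inferInstanceAs (Finite (_ ⊕ _))

variable {α}

def lipConstraint : LipConstraint α → (α → ℝ) →ₗ[ℝ] ℝ
  | .inl a => LinearMap.proj a.1
  | .inr p => LinearMap.proj (R := ℝ) (φ := fun _ : α => ℝ) p.1.2 - LinearMap.proj p.1.1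

@[simp]
lemma lipConstraint_inr_apply (p : {p : α × α // p.1 ⋖ p.2}) (g : α → ℝ) :
    lipConstraint (.inr p) g = g p.1.2 - g p.1.1 := rfl

lemma mem_lip_iff {g : α → ℝ} : g ∈ Lip α ↔ ∀ i, lipConstraint i g ∈ Icc 0 1 := by
  constructor
  · rintro ⟨hmin, hcov⟩ (⟨a, ha⟩ | ⟨⟨a, b⟩, hab⟩)
    exacts [hmin a ha, hcov a b hab]
  · intro h
    exact ⟨fun a ha => h (.inl ⟨a, ha⟩), fun a b hab => h (.inr ⟨(a, b), hab⟩)⟩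

lemma lipConstraint_eq_zero_or_eq_one {f : α → ℝ} (hf : f ∈ Lip α)
    (hint : ∀ a, ∃ z : ℤ, f a = z) (i : LipConstraint α) :
    lipConstraint i f = 0 ∨ lipConstraint i f = 1 := by
  obtain ⟨z, hz⟩ : ∃ z : ℤ, lipConstraint i f = z := by
    rcases i with ⟨a, _⟩ | ⟨⟨a, b⟩, _⟩
    · exact hint a
    · obtain ⟨za, ha⟩ := hint a
      obtain ⟨zb, hb⟩ := hint b
      exact ⟨zb - za, by simp [ha, hb]⟩
  have hmem := mem_lip_iff.1 hf i
  rw [hz] at hmem ⊢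
  exact Int.cast_eq_zero_or_eq_one_of_mem_Icc hmem

lemma eq_of_forall_lipConstraint_eq [Finite α] {f g : α → ℝ}
    (h : ∀ i, lipConstraint i g = lipConstraint i f) : g = f :=
  eq_of_eq_on_isMin_of_sub_eq_on_covBy (fun a ha => h (.inl ⟨a, ha⟩))
    (fun a b hab => h (.inr ⟨(a, b), hab⟩))

end LipConstraint

/-- Every integer point of `Lip(P)` is a vertex: there is a linear functional
uniquely maximized on `Lip(P)` at it. -/
theorem lip_integer_point_is_vertex {α : Type*} [PartialOrder α] [Fintype α]
    (f : α → ℝ) (hf : f ∈ Lip α) (hint : ∀ a, ∃ z : ℤ, f a = (z : ℝ)) :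
    ∃ c : (α → ℝ) →ₗ[ℝ] ℝ, ∀ g ∈ Lip α, g ≠ f → c g < c f := by
  obtain ⟨c, hc⟩ := exists_linearMap_lt_of_forall_eq_zero_or_eq_one lipConstraint
    (lipConstraint_eq_zero_or_eq_one hf hint)
  refine ⟨c, fun g hg hgf => hc g (mem_lip_iff.1 hg) ?_⟩
  by_contra! h
  exact hgf (eq_of_forall_lipConstraint_eq h)
end

section
/- Let P be the short hanging tree on n elements: elements 1,...,n-1 are minimal and all lie below the maximum n. Then Lip(P) has exactly 2^{n-1} + 2 vertices, namely the indicator vectors 1_F for all filters F ⊆ P, together with 1_P + 1_{{n}}. -/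
/-!
`Lip(P)` is the preimage of the cube `[0,1]^{2n}` under the injective linear map
`x ↦ (x i, x top - x i)_i`, and every claimed vertex is sent to a vertex of the cube, hence is
extreme. Conversely, an extreme point restricted to a line through it is an endpoint of the
resulting interval. Along the coordinate axes this puts every `x i` at one of its bounds
`max 0 (t - 1)`, `min 1 t`, where `t = x top`; the point then lies on a segment joining two
claimed vertices, and extremality along that segment forces `t ∈ {0, 1, 2}`. The filters are `∅`
and the `2^n` sets containing the top.
-/

/-- The Lipschitz polytope of the short hanging tree on `n+1` elements
(minimal elements `0,…,n-1`, maximum `Fin.last n`):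
`0 ≤ x i ≤ 1` and `0 ≤ x (last) - x i ≤ 1` for all non-maximal `i`. -/
def lipSHT (n : ℕ) : Set (Fin (n + 1) → ℝ) :=
  {x | ∀ i : Fin (n + 1), i ≠ Fin.last n →
        (0 ≤ x i ∧ x i ≤ 1) ∧
        (0 ≤ x (Fin.last n) - x i ∧ x (Fin.last n) - x i ≤ 1)}

/-- The claimed vertex set: indicator vectors `1_F` of filters `F`
(i.e. `F` nonempty implies the maximum lies in `F`), together with `1_P + 1_{top}`. -/
def vertSHT (n : ℕ) : Set (Fin (n + 1) → ℝ) :=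
  {x | (∃ F : Finset (Fin (n + 1)), (∀ i ∈ F, Fin.last n ∈ F) ∧
          x = fun i => if i ∈ F then (1 : ℝ) else 0) ∨
        x = fun i => if i = Fin.last n then (2 : ℝ) else 1}

open Set Function AffineMap

section ExtremePoints

variable {𝕜 E F : Type*} [Ring 𝕜] [PartialOrder 𝕜] [IsOrderedRing 𝕜]
  [AddCommGroup E] [Module 𝕜 E] [AddCommGroup F] [Module 𝕜 F]

theorem mem_extremePoints_preimage {f : E →ᵃ[𝕜] F} (hf : Injective f) {T : Set F} {x : E}
    (hx : f x ∈ T.extremePoints 𝕜) : x ∈ (f ⁻¹' T).extremePoints 𝕜 :=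
  ⟨hx.1, fun _ hy _ hz hxyz ↦
    hf <| hx.2 hy hz <| image_openSegment 𝕜 f _ _ ▸ mem_image_of_mem f hxyz⟩

end ExtremePoints

section RealExtremePoints

variable {E : Type*} [AddCommGroup E] [Module ℝ E]

theorem eq_or_eq_of_lineMap_mem_extremePoints {S : Set E} {p q : E} (hpq : p ≠ q) {a b v : ℝ}
    (hv : lineMap p q v ∈ S.extremePoints ℝ) (ha : lineMap p q a ∈ S) (hb : lineMap p q b ∈ S)
    (hav : a ≤ v) (hvb : v ≤ b) : v = a ∨ v = b := by
  have hv' := mem_extremePoints_preimage (lineMap_injective ℝ hpq) hv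
  by_contra! hne
  have hab : v ∈ openSegment ℝ a b := by
    rw [openSegment_eq_Ioo ((hav.lt_of_ne' hne.1).trans (hvb.lt_of_ne hne.2))]
    exact ⟨hav.lt_of_ne' hne.1, hvb.lt_of_ne hne.2⟩
  exact hne.1 (hv'.2 ha hb hab).symm

theorem lineMap_mem_of_mem_extremePoints {S V : Set E} (hVS : V ⊆ S) {p q : E} (hp : p ∈ V)
    (hq : q ∈ V) {v : ℝ} (hv : v ∈ Icc 0 1) (hx : lineMap p q v ∈ S.extremePoints ℝ) :
    lineMap p q v ∈ V := by
  obtain rfl | hpq := eq_or_ne p q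
  · rwa [lineMap_same_apply]
  rcases eq_or_eq_of_lineMap_mem_extremePoints hpq hx (by simpa using hVS hp)
    (by simpa using hVS hq) hv.1 hv.2 with rfl | rfl
  · rwa [lineMap_apply_zero]
  · rwa [lineMap_apply_one]

theorem lineMap_update_zero_one {ι : Type*} [DecidableEq ι] (x : ι → ℝ) (i : ι) (w : ℝ) :
    lineMap (update x i 0) (update x i 1) w = update x i w := by
  ext j
  obtain rfl | hji := eq_or_ne j i <;> simp [lineMap_apply_module, *]
  ring

theorem apply_eq_or_eq_of_mem_extremePoints {ι : Type*} [DecidableEq ι] {S : Set (ι → ℝ)}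
    {x : ι → ℝ} (hx : x ∈ S.extremePoints ℝ) {i : ι} {a b : ℝ} (ha : update x i a ∈ S)
    (hb : update x i b ∈ S) (hai : a ≤ x i) (hib : x i ≤ b) : x i = a ∨ x i = b := by
  have hne : update x i 0 ≠ update x i 1 := fun h ↦ by simpa using congrFun h i
  rw [← lineMap_update_zero_one] at ha hb
  rw [← update_eq_self i x, ← lineMap_update_zero_one] at hx
  exact eq_or_eq_of_lineMap_mem_extremePoints hne hx ha hb hai hib

end RealExtremePoints

namespace ShortHangingTree

variable {n : ℕ}

def ind (F : Finset (Fin (n + 1))) : Fin (n + 1) → ℝ := fun i ↦ if i ∈ F then 1 else 0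

/-- `1_P + 1_{top}`, the one vertex that is not the indicator of a filter. -/
def topVertex (n : ℕ) : Fin (n + 1) → ℝ := fun i ↦ if i = Fin.last n then 2 else 1

/-- The values and differences along the cover relations `i ⋖ top` of the tree. -/
def edgeCoords (n : ℕ) : (Fin (n + 1) → ℝ) →ₗ[ℝ] Fin n → ℝ × ℝ where
  toFun x j := (x j.castSucc, x (Fin.last n) - x j.castSucc)
  map_add' x y := by ext j <;> simp only [Pi.add_apply, Prod.fst_add, Prod.snd_add]; ring
  map_smul' c x := by ext j <;> simp [mul_sub]

theorem edgeCoords_injective (hn : 1 ≤ n) : Injective (edgeCoords n) := by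
  intro x y hxy
  have hcoord j := congrFun hxy j
  simp only [edgeCoords, LinearMap.coe_mk, AddHom.coe_mk, Prod.mk.injEq] at hcoord
  have hlast : x (Fin.last n) = y (Fin.last n) := by
    obtain ⟨h₁, h₂⟩ := hcoord ⟨0, hn⟩
    linarith
  ext i
  induction i using Fin.lastCases with
  | last => exact hlast
  | cast j => exact (hcoord j).1

theorem lipSHT_eq_preimage (n : ℕ) :
    lipSHT n = edgeCoords n ⁻¹' univ.pi fun _ ↦ Icc 0 1 ×ˢ Icc 0 1 := by
  ext x
  simp only [mem_preimage, mem_univ_pi, mem_prod, mem_Icc]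
  simp [lipSHT, edgeCoords, Fin.forall_fin_succ', Fin.castSucc_ne_last, sub_nonneg]

theorem vertSHT_subset_extremePoints (hn : 1 ≤ n) :
    vertSHT n ⊆ (lipSHT n).extremePoints ℝ := by
  intro x hx
  rw [lipSHT_eq_preimage]
  refine mem_extremePoints_preimage (f := (edgeCoords n).toAffineMap) (edgeCoords_injective hn) ?_
  simp only [extremePoints_pi, extremePoints_prod, extremePoints_Icc zero_le_one]
  rintro j -
  rcases hx with ⟨F, hF, rfl⟩ | rfl
  · by_cases hlast : Fin.last n ∈ F
    · by_cases hj : j.castSucc ∈ F <;> simp [edgeCoords, hlast, hj]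
    · have hj : j.castSucc ∉ F := fun hj ↦ hlast (hF _ hj)
      simp [edgeCoords, hlast, hj]
  · norm_num [edgeCoords, Fin.castSucc_ne_last]

theorem last_mem_Icc_of_mem_lipSHT (hn : 1 ≤ n) {x : Fin (n + 1) → ℝ} (hx : x ∈ lipSHT n) :
    x (Fin.last n) ∈ Icc 0 2 := by
  obtain ⟨⟨h₀, h₁⟩, h₂, h₃⟩ := hx _ (Fin.castSucc_ne_last (⟨0, hn⟩ : Fin n))
  constructor <;> linarith

theorem update_mem_lipSHT {x : Fin (n + 1) → ℝ} (hx : x ∈ lipSHT n) {i : Fin (n + 1)}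
    (hi : i ≠ Fin.last n) {w : ℝ} (hw : w ∈ Icc 0 1) (hw' : x (Fin.last n) - w ∈ Icc 0 1) :
    update x i w ∈ lipSHT n := by
  intro j hj
  rw [update_of_ne hi.symm]
  obtain rfl | hji := eq_or_ne j i
  · simpa only [update_self] using ⟨hw, hw'⟩
  · simpa only [update_of_ne hji] using hx j hj

theorem ind_mem_vertSHT {F : Finset (Fin (n + 1))} (hF : Fin.last n ∈ F) : ind F ∈ vertSHT n :=
  Or.inl ⟨F, fun _ _ ↦ hF, rfl⟩

theorem ind_empty_mem_vertSHT : ind ∅ ∈ vertSHT n :=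
  Or.inl ⟨∅, by simp, rfl⟩

theorem topVertex_mem_vertSHT : topVertex n ∈ vertSHT n :=
  Or.inr rfl

/-- If `t = x top ≤ 1`, every other coordinate of the extreme point `x` is at one of its bounds
`0`, `t`, so `x = t • 1_F` lies on the segment from `0` to `1_F`; if `t ≥ 1`, the bounds are
`t - 1`, `1` and `x` lies on the segment from `1_F` to `1_P + 1_{top}`. -/
theorem exists_lineMap_eq_of_mem_extremePoints (hn : 1 ≤ n) {x : Fin (n + 1) → ℝ}
    (hx : x ∈ (lipSHT n).extremePoints ℝ) :
    ∃ p ∈ vertSHT n, ∃ q ∈ vertSHT n, ∃ v ∈ Icc (0 : ℝ) 1, lineMap p q v = x := by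
  have hxS := hx.1
  obtain ⟨ht₀, ht₂⟩ := last_mem_Icc_of_mem_lipSHT hn hxS
  set t := x (Fin.last n) with ht
  rcases le_total t 1 with ht₁ | ht₁
  · have hcoord (i) (hi : i ≠ Fin.last n) : x i = 0 ∨ x i = t := by
      obtain ⟨⟨h₀, -⟩, h₂, -⟩ := hxS i hi
      exact apply_eq_or_eq_of_mem_extremePoints hx
        (update_mem_lipSHT hxS hi ⟨le_rfl, zero_le_one⟩ ⟨by linarith, by linarith⟩)
        (update_mem_lipSHT hxS hi ⟨ht₀, ht₁⟩ ⟨by linarith, by linarith⟩) h₀ (by linarith)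
    refine ⟨ind ∅, ind_empty_mem_vertSHT, ind {i | x i = t}, ind_mem_vertSHT (by simp [t]),
      t, ⟨ht₀, ht₁⟩, ?_⟩
    ext i
    obtain rfl | hi := eq_or_ne i (Fin.last n)
    · simp [ind, lineMap_apply_module, ← ht]
    · rcases hcoord i hi with h | h <;> by_cases h' : x i = t <;>
        simp_all [ind, lineMap_apply_module]
  · have hcoord (i) (hi : i ≠ Fin.last n) : x i = t - 1 ∨ x i = 1 := by
      obtain ⟨⟨-, h₁⟩, -, h₃⟩ := hxS i hi
      exact apply_eq_or_eq_of_mem_extremePoints hx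
        (update_mem_lipSHT hxS hi ⟨by linarith, by linarith⟩ ⟨by linarith, by linarith⟩)
        (update_mem_lipSHT hxS hi ⟨zero_le_one, le_rfl⟩ ⟨by linarith, by linarith⟩)
        (by linarith) h₁
    refine ⟨ind {i | 1 ≤ x i}, ind_mem_vertSHT (by simpa [t] using ht₁), topVertex n,
      topVertex_mem_vertSHT, t - 1, ⟨by linarith, by linarith⟩, ?_⟩
    ext i
    obtain rfl | hi := eq_or_ne i (Fin.last n)
    · simp [ind, topVertex, lineMap_apply_module, ← ht, ht₁]
      ring
    · have hi₁ := (hxS i hi).1.2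
      rcases hcoord i hi with h | h <;> by_cases h' : 1 ≤ x i <;>
        simp [ind, topVertex, lineMap_apply_module, hi, h'] <;> linarith

theorem extremePoints_lipSHT_subset (hn : 1 ≤ n) : (lipSHT n).extremePoints ℝ ⊆ vertSHT n := by
  intro x hx
  obtain ⟨p, hp, q, hq, v, hv, rfl⟩ := exists_lineMap_eq_of_mem_extremePoints hn hx
  exact lineMap_mem_of_mem_extremePoints
    ((vertSHT_subset_extremePoints hn).trans extremePoints_subset) hp hq hv hx

theorem ind_injective : Injective (ind (n := n)) := by
  intro F G h
  ext i
  have hi := congrFun h i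
  by_cases hF : i ∈ F <;> by_cases hG : i ∈ G <;> simp_all [ind]

theorem topVertex_notMem_range_ind : topVertex n ∉ range ind := by
  rintro ⟨F, hF⟩
  have h := congrFun hF (Fin.last n)
  by_cases hl : Fin.last n ∈ F <;> norm_num [ind, topVertex, hl] at h

theorem vertSHT_eq_insert_image (n : ℕ) :
    vertSHT n = insert (topVertex n) (ind '' {F | ∀ i ∈ F, Fin.last n ∈ F}) := by
  ext x
  simp only [vertSHT, mem_insert_iff, mem_image, mem_ofPred_eq, eq_comm, or_comm]
  rfl

theorem ncard_filters (n : ℕ) :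
    {F : Finset (Fin (n + 1)) | ∀ i ∈ F, Fin.last n ∈ F}.ncard = 2 ^ n + 1 := by
  have h : {F : Finset (Fin (n + 1)) | ∀ i ∈ F, Fin.last n ∈ F} =
      insert ∅ ↑(Finset.Icc {Fin.last n} Finset.univ) := by
    ext F
    simp only [mem_ofPred_eq, Finset.coe_Icc, mem_insert_iff, mem_Icc,
      Finset.singleton_subset_iff, Finset.subset_univ, and_true]
    constructor
    · intro hF
      rcases F.eq_empty_or_nonempty with rfl | ⟨i, hi⟩
      · exact .inl rfl
      · exact .inr (hF i hi)
    · rintro (rfl | hF) <;> simp [*]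
  rw [h, ncard_insert_of_notMem (by simp), ncard_coe_finset,
    Finset.card_Icc_finset (Finset.subset_univ _)]
  simp

theorem ncard_vertSHT (n : ℕ) : (vertSHT n).ncard = 2 ^ n + 2 := by
  rw [vertSHT_eq_insert_image,
    ncard_insert_of_notMem (fun h ↦ topVertex_notMem_range_ind (image_subset_range _ _ h))
      ((toFinite _).image _),
    ncard_image_of_injective _ ind_injective, ncard_filters]

end ShortHangingTree

open ShortHangingTree in
/-- The Lipschitz polytope of the short hanging tree on `n+1 ≥ 2` elements has
exactly `2^n + 2` vertices: the indicators of filters and `1_P + 1_{top}`. -/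
theorem lip_short_hanging_tree_vertices (n : ℕ) (hn : 1 ≤ n) :
    Set.extremePoints ℝ (lipSHT n) = vertSHT n ∧ (vertSHT n).ncard = 2 ^ n + 2 :=
  ⟨(extremePoints_lipSHT_subset hn).antisymm (vertSHT_subset_extremePoints hn), ncard_vertSHT n⟩
end

section
/- Lipschitz polytopes are 2-level: for every facet F of Lip(P), all vertices of Lip(P) lie either on the affine hyperplane aff(F) or on a single translate of it. -/
/-!
`Lip α` is cut out by the slabs `0 ≤ g ≤ 1`, where `g` runs over the forms `f ↦ f a` (`a` minimal)
and `f ↦ f b - f a` (`a ⋖ b`). A proper face lies in one of the hyperplanes `g = 0`, `g = 1`: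
otherwise averaging gives a point of the face strictly inside every slab, and a linear functional
maximised at such a point is constant on the polytope. For a facet, that hyperplane is its affine
hull, so it suffices that each `g` takes only the values `0` and `1` at vertices, i.e. that vertices
are integral. If a vertex `v` had a non-integral coordinate, shifting by `±ε` all coordinates with
the same fractional part would stay in `Lip α`: a form changed by the shift compares values with
different fractional parts, so it is not tight at `v`.
-/

open Set Filter Topology Module

section Convex

variable {E : Type*} [AddCommGroup E] [Module ℝ E]

lemma Convex.exists_forall_pos_of_concaveOn {F : Set E} (hF : Convex ℝ F) {S : Set (E → ℝ)}
    (hS : S.Finite) (hconc : ∀ f ∈ S, ConcaveOn ℝ F f) (hnonneg : ∀ f ∈ S, ∀ x ∈ F, 0 ≤ f x)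
    (hpos : ∀ f ∈ S, ∃ x ∈ F, 0 < f x) (hne : F.Nonempty) :
    ∃ x ∈ F, ∀ f ∈ S, 0 < f x := by
  induction S, hS using Set.Finite.induction_on with
  | empty => exact ⟨hne.some, hne.some_mem, by simp⟩
  | @insert f S _ _ ih =>
    simp only [mem_insert_iff, forall_eq_or_imp] at hconc hnonneg hpos ⊢
    obtain ⟨x, hxF, hx⟩ := ih hconc.2 hnonneg.2 hpos.2
    obtain ⟨y, hyF, hy⟩ := hpos.1
    have hmid : ∀ g : E → ℝ, ConcaveOn ℝ F g → (∀ z ∈ F, 0 ≤ g z) → 0 < g x ∨ 0 < g y →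
        0 < g ((1 / 2 : ℝ) • x + (1 / 2 : ℝ) • y) := fun g hg hg0 h ↦ by
      have := hg.2 hxF hyF (by norm_num : (0 : ℝ) ≤ 1 / 2) (by norm_num : (0 : ℝ) ≤ 1 / 2)
        (by norm_num)
      simp only [smul_eq_mul] at this
      rcases h with h | h <;> linarith [hg0 x hxF, hg0 y hyF]
    refine ⟨_, hF hxF hyF (by norm_num) (by norm_num) (by norm_num),
      hmid f hconc.1 hnonneg.1 (Or.inr hy), fun g hg ↦ ?_⟩
    exact hmid g (hconc.2 g hg) (hnonneg.2 g hg) (Or.inl (hx g hg))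

lemma eq_zero_of_mem_extremePoints_of_eventually {A : Set E} {v w : E}
    (hv : v ∈ A.extremePoints ℝ) (h : ∀ᶠ t in 𝓝 (0 : ℝ), v + t • w ∈ A) : w = 0 := by
  have hneg : ∀ᶠ t in 𝓝 (0 : ℝ), v + (-t) • w ∈ A :=
    (continuous_neg.tendsto' 0 0 neg_zero).eventually h
  obtain ⟨t, ⟨hplus, hminus⟩, ht⟩ :=
    ((h.and hneg).filter_mono nhdsWithin_le_nhds |>.and self_mem_nhdsWithin).exists
      (f := 𝓝[>] (0 : ℝ))
  have hseg : v ∈ openSegment ℝ (v + t • w) (v + (-t) • w) :=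
    ⟨1 / 2, 1 / 2, by norm_num, by norm_num, by norm_num, by module⟩
  have := hv.2 hplus hminus hseg
  simpa [ht.ne'] using this

variable [TopologicalSpace E]

lemma IsExposed.eq_of_forall_eventually {A F : Set E} (hF : IsExposed ℝ A F) {x : E} (hx : x ∈ F)
    (h : ∀ y ∈ A, ∀ᶠ t in 𝓝 (0 : ℝ), x + t • (x - y) ∈ A) : F = A := by
  obtain ⟨l, rfl⟩ := hF ⟨x, hx⟩
  refine Subset.antisymm (fun y hy ↦ hy.1) fun y hy ↦ ⟨hy, fun z hz ↦ ?_⟩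
  -- moving from `x` away from `y` cannot increase `l`, so `l y ≥ l x`
  obtain ⟨t, hmem, ht⟩ :=
    ((h y hy).filter_mono nhdsWithin_le_nhds |>.and self_mem_nhdsWithin).exists
      (f := 𝓝[>] (0 : ℝ))
  have hle := hx.2 _ hmem
  simp only [map_add, map_smul, map_sub, smul_eq_mul] at hle
  have : l x ≤ l y := by nlinarith [show (0 : ℝ) < t from ht]
  linarith [hx.2 z hz]

end Convex

section Slab

variable {E : Type*} [AddCommGroup E] [Module ℝ E]

def slabPolyhedron (G : Set (Dual ℝ E)) : Set E :=
  {x | ∀ g ∈ G, g x ∈ Icc (0 : ℝ) 1}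

variable {G : Set (Dual ℝ E)}

lemma convex_slabPolyhedron : Convex ℝ (slabPolyhedron G) := by
  simp only [slabPolyhedron, ofPred_forall]
  exact convex_iInter₂ fun g _ ↦ (convex_Icc 0 1).linear_preimage g

lemma eventually_add_smul_mem_slabPolyhedron (hG : G.Finite) {v w : E}
    (hv : v ∈ slabPolyhedron G) (hw : ∀ g ∈ G, g w ≠ 0 → g v ∈ Ioo 0 1) :
    ∀ᶠ t in 𝓝 (0 : ℝ), v + t • w ∈ slabPolyhedron G := by
  refine (eventually_all_finite hG).2 fun g hg ↦ ?_
  simp only [map_add, map_smul, smul_eq_mul]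
  by_cases hgw : g w = 0
  · simp only [hgw, mul_zero, add_zero]
    exact Eventually.of_forall fun _ ↦ hv g hg
  have hcont : Tendsto (fun t : ℝ ↦ g v + t * g w) (𝓝 0) (𝓝 (g v)) := by
    simpa using ((tendsto_id (x := 𝓝 (0 : ℝ))).mul_const (g w)).const_add (g v)
  exact (hcont.eventually (isOpen_Ioo.mem_nhds (hw g hg hgw))).mono
    fun _ h ↦ Ioo_subset_Icc_self h

variable [TopologicalSpace E]

lemma IsExposed.exists_forall_eq_zero_or_forall_eq_one (hG : G.Finite) {F : Set E}
    (hF : IsExposed ℝ (slabPolyhedron G) F) (hne : F.Nonempty) (hproper : F ≠ slabPolyhedron G) :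
    ∃ g ∈ G, (∀ x ∈ F, g x = 0) ∨ (∀ x ∈ F, g x = 1) := by
  by_contra! h
  have hsub : F ⊆ slabPolyhedron G := hF.subset
  have hconv : Convex ℝ F := hF.convex convex_slabPolyhedron
  obtain ⟨x, hxF, hx⟩ := Convex.exists_forall_pos_of_concaveOn hconv
    (S := (fun g x ↦ g x) '' G ∪ (fun g x ↦ 1 - g x) '' G)
    ((hG.image _).union (hG.image _))
    (by
      rintro _ (⟨g, -, rfl⟩ | ⟨g, -, rfl⟩)
      · exact g.concaveOn hconv
      · exact (concaveOn_const 1 hconv).sub (g.convexOn hconv))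
    (by
      rintro _ (⟨g, hg, rfl⟩ | ⟨g, hg, rfl⟩) x hx
      · exact (hsub hx g hg).1
      · exact sub_nonneg.2 (hsub hx g hg).2)
    (by
      rintro _ (⟨g, hg, rfl⟩ | ⟨g, hg, rfl⟩)
      · obtain ⟨x, hx, hgx⟩ := (h g hg).1
        exact ⟨x, hx, lt_of_le_of_ne (hsub hx g hg).1 (Ne.symm hgx)⟩
      · obtain ⟨x, hx, hgx⟩ := (h g hg).2
        exact ⟨x, hx, sub_pos.2 (lt_of_le_of_ne (hsub hx g hg).2 hgx)⟩)
    hne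
  have hint : ∀ g ∈ G, g x ∈ Ioo 0 1 := fun g hg ↦
    ⟨hx _ (Or.inl ⟨g, hg, rfl⟩), sub_pos.1 (hx _ (Or.inr ⟨g, hg, rfl⟩))⟩
  exact hproper <| hF.eq_of_forall_eventually hxF fun y _ ↦
    eventually_add_smul_mem_slabPolyhedron hG (hsub hxF) fun g hg _ ↦ hint g hg

end Slab

section Hyperplane

variable {E : Type*} [AddCommGroup E] [Module ℝ E] [FiniteDimensional ℝ E]
  {F : Set E} {g : Dual ℝ E} {c : ℝ}

lemma mem_affineSpan_iff_of_forall_eq (hg : g ≠ 0) (hc : ∀ x ∈ F, g x = c) (hne : F.Nonempty)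
    (hdim : finrank ℝ (vectorSpan ℝ F) + 1 = finrank ℝ E) (v : E) :
    v ∈ affineSpan ℝ F ↔ g v = c := by
  obtain ⟨p, hp⟩ := hne
  have hH : ∀ v, v ∈ AffineSubspace.mk' p (LinearMap.ker g) ↔ g v = c := fun v ↦ by
    rw [AffineSubspace.mem_mk', LinearMap.mem_ker, vsub_eq_sub, map_sub, hc p hp, sub_eq_zero]
  have hle : affineSpan ℝ F ≤ AffineSubspace.mk' p (LinearMap.ker g) :=
    affineSpan_le.2 fun x hx ↦ (hH x).2 (hc x hx)
  have hdir : (affineSpan ℝ F).direction = LinearMap.ker g := by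
    refine Submodule.eq_of_le_of_finrank_eq
      (by simpa using AffineSubspace.direction_le hle) ?_
    rw [direction_affineSpan]
    have := Dual.finrank_ker_add_one_of_ne_zero hg
    omega
  rw [← hH, AffineSubspace.eq_of_direction_eq_of_nonempty_of_le
    (by rw [hdir, AffineSubspace.direction_mk']) ⟨p, subset_affineSpan ℝ F hp⟩ hle]

lemma exists_forall_mem_affineSpan_or_sub_mem_affineSpan (hg : g ≠ 0)
    (hc : ∀ x ∈ F, g x = c) (hne : F.Nonempty)
    (hdim : finrank ℝ (vectorSpan ℝ F) + 1 = finrank ℝ E) {S : Set E} {c' : ℝ}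
    (hS : ∀ v ∈ S, g v = c ∨ g v = c') :
    ∃ q : E, ∀ v ∈ S, v ∈ affineSpan ℝ F ∨ v - q ∈ affineSpan ℝ F := by
  obtain ⟨q, hq⟩ := LinearMap.surjective hg (c' - c)
  refine ⟨q, fun v hv ↦ ?_⟩
  simp only [mem_affineSpan_iff_of_forall_eq hg hc hne hdim, map_sub, hq]
  rcases hS v hv with h | h
  · exact Or.inl h
  · exact Or.inr (by rw [h]; ring)

end Hyperplane

section Lip

variable {α : Type*} [PartialOrder α]

def lipForms (α : Type*) [PartialOrder α] : Set (Dual ℝ (α → ℝ)) :=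
  (fun a ↦ LinearMap.proj a) '' {a | IsMin a} ∪
    (fun p : α × α ↦ (LinearMap.proj p.2 : Dual ℝ (α → ℝ)) - LinearMap.proj p.1) ''
      {p | p.1 ⋖ p.2}

lemma lip_eq_slabPolyhedron : Lip α = slabPolyhedron (lipForms α) := by
  ext f
  simp only [Lip, slabPolyhedron, lipForms, mem_ofPred_eq, mem_union, or_imp, forall_and,
    forall_mem_image, Prod.forall, LinearMap.sub_apply, LinearMap.coe_proj, Function.eval, mem_Icc]
  exact and_and_and_comm

lemma lipForms_finite [Finite α] : (lipForms α).Finite :=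
  ((toFinite _).image _).union ((toFinite _).image _)

lemma lipForms_ne_zero {g : Dual ℝ (α → ℝ)} (hg : g ∈ lipForms α) : g ≠ 0 := by
  classical
  rintro rfl
  rcases hg with ⟨a, -, h⟩ | ⟨⟨a, b⟩, hab, h⟩
  · simpa using LinearMap.congr_fun h (Pi.single a 1)
  · simpa [Pi.single_eq_of_ne hab.ne] using LinearMap.congr_fun h (Pi.single b 1)

lemma fract_eq_zero_of_mem_extremePoints_lip [Finite α] {v : α → ℝ}
    (hv : v ∈ (Lip α).extremePoints ℝ) (x : α) : Int.fract (v x) = 0 := by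
  classical
  by_contra hx
  set d : α → ℝ := fun y ↦ if Int.fract (v y) = Int.fract (v x) then 1 else 0
  rw [lip_eq_slabPolyhedron] at hv
  suffices ∀ g ∈ lipForms α, g d ≠ 0 → g v ∈ Ioo 0 1 by
    have := eq_zero_of_mem_extremePoints_of_eventually hv
      (eventually_add_smul_mem_slabPolyhedron lipForms_finite hv.1 this)
    simpa [d] using congr_fun this x
  intro g hg hgd
  rw [← Icc_sdiff_both]
  refine ⟨hv.1 g hg, fun h01 ↦ hgd ?_⟩
  simp only [mem_insert_iff, mem_singleton_iff] at h01
  rcases hg with ⟨a, -, rfl⟩ | ⟨⟨a, b⟩, -, rfl⟩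
  · simp only [LinearMap.coe_proj, Function.eval] at h01
    have : Int.fract (v a) = 0 := by rcases h01 with h | h <;> simp [h]
    simp [d, this, Ne.symm hx]
  · have : Int.fract (v b) = Int.fract (v a) := by
      simp only [LinearMap.sub_apply, LinearMap.coe_proj, Function.eval] at h01
      rcases h01 with h | h
      · rw [sub_eq_zero.1 h]
      · rw [show v b = v a + 1 by linarith, Int.fract_add_one]
    simp [d, this]

lemma apply_eq_zero_or_eq_one_of_mem_extremePoints_lip [Finite α] {v : α → ℝ}
    (hv : v ∈ (Lip α).extremePoints ℝ) {g : Dual ℝ (α → ℝ)} (hg : g ∈ lipForms α) :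
    g v = 0 ∨ g v = 1 := by
  have hgv : g v ∈ Icc (0 : ℝ) 1 := lip_eq_slabPolyhedron.subset hv.1 g hg
  obtain ⟨n, hn⟩ : g v ∈ range ((↑) : ℤ → ℝ) := by
    have hint x := Int.fract_eq_zero_iff.1 (fract_eq_zero_of_mem_extremePoints_lip hv x)
    rcases hg with ⟨a, -, rfl⟩ | ⟨⟨a, b⟩, -, rfl⟩
    · exact hint a
    · obtain ⟨m, hm⟩ := hint a
      obtain ⟨k, hk⟩ := hint b
      exact ⟨k - m, by simp [hm, hk]⟩
  rw [← hn] at hgv ⊢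
  have h0 : 0 ≤ n := by exact_mod_cast hgv.1
  have h1 : n ≤ 1 := by exact_mod_cast hgv.2
  interval_cases n <;> simp

end Lip

/-- Lipschitz polytopes are 2-level: for every facet `F` of `Lip(P)` (a proper
nonempty exposed face of affine dimension one less than full) there is a translate
`q + aff F` such that every vertex of `Lip(P)` lies on `aff F` or on `q + aff F`. -/
theorem lip_two_level {α : Type*} [PartialOrder α] [Fintype α]
    (F : Set (α → ℝ)) (hexp : IsExposed ℝ (Lip α) F) (hne : F.Nonempty)
    (hproper : F ≠ Lip α)
    (hdim : Module.finrank ℝ ↥(vectorSpan ℝ F) + 1 = Fintype.card α) :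
    ∃ q : α → ℝ, ∀ v ∈ Set.extremePoints ℝ (Lip α),
      v ∈ affineSpan ℝ F ∨ v - q ∈ affineSpan ℝ F := by
  rw [← finrank_fintype_fun_eq_card ℝ] at hdim
  rw [lip_eq_slabPolyhedron] at hexp hproper
  obtain ⟨g, hg, hF | hF⟩ :=
    hexp.exists_forall_eq_zero_or_forall_eq_one lipForms_finite hne hproper
  · exact exists_forall_mem_affineSpan_or_sub_mem_affineSpan (lipForms_ne_zero hg) hF hne hdim
      fun _ hv ↦ apply_eq_zero_or_eq_one_of_mem_extremePoints_lip hv hg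
  · exact exists_forall_mem_affineSpan_or_sub_mem_affineSpan (lipForms_ne_zero hg) hF hne hdim
      fun _ hv ↦ (apply_eq_zero_or_eq_one_of_mem_extremePoints_lip hv hg).symm
end

section
/- Let P be a naturally labeled poset on {1,...,n}, τ a permutation of {1,...,n}, and q ∈ ℤ^n. Then the alcove q + Δ_τ is contained in Lip(P) if and only if τ is descent-compatible with P and q_a = des_{P,τ}(a) for all a ∈ P. -/
/-- `b` covers `a` in the partial order `r`. -/
def CovR {n : ℕ} (r : Fin n → Fin n → Prop) (a b : Fin n) : Prop :=
  r a b ∧ a ≠ b ∧ ∀ c, r a c → r c b → c = a ∨ c = b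

/-- `a` is a minimal element of the partial order `r`. -/
def MinR {n : ℕ} (r : Fin n → Fin n → Prop) (a : Fin n) : Prop :=
  ∀ b, r b a → b = a

/-- `c` is a saturated chain in `P̂` from `0̂` to `a`: its `P`-part starts at a
minimal element of `P`, proceeds by cover relations, and ends at `a`. -/
def IsSatChain {n : ℕ} (r : Fin n → Fin n → Prop) (k : ℕ)
    (c : Fin (k + 1) → Fin n) (a : Fin n) : Prop :=
  MinR r (c 0) ∧ (∀ i : Fin k, CovR r (c i.castSucc) (c i.succ)) ∧ c (Fin.last k) = a

/-- The number of descents of `τ` along the saturated chain `c` (the initial step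
`0̂ ⋖ c 0` is never a descent since `τ(0̂) = 0`). -/
def desAlong {n : ℕ} (τ : Equiv.Perm (Fin n)) (k : ℕ) (c : Fin (k + 1) → Fin n) : ℕ :=
  (Finset.univ.filter fun i : Fin k => τ (c i.succ) < τ (c i.castSucc)).card

/-- `τ` is descent-compatible with the poset `r`: the number of descents along a
saturated chain from `0̂` to `a` does not depend on the chain. -/
def DescentCompatible {n : ℕ} (r : Fin n → Fin n → Prop) (τ : Equiv.Perm (Fin n)) : Prop :=
  ∀ a : Fin n, ∀ (k₁ k₂ : ℕ) (c₁ : Fin (k₁ + 1) → Fin n) (c₂ : Fin (k₂ + 1) → Fin n),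
    IsSatChain r k₁ c₁ a → IsSatChain r k₂ c₂ a →
      desAlong τ k₁ c₁ = desAlong τ k₂ c₂

/-- The Lipschitz polytope of the poset `r` on `Fin n`. -/
def LipR {n : ℕ} (r : Fin n → Fin n → Prop) : Set (Fin n → ℝ) :=
  {f | (∀ a, MinR r a → 0 ≤ f a ∧ f a ≤ 1) ∧
       ∀ a b, CovR r a b → 0 ≤ f b - f a ∧ f b - f a ≤ 1}

/-- The alcove `Δ_τ = {x : 0 ≤ x_{τ⁻¹(1)} ≤ ⋯ ≤ x_{τ⁻¹(n)} ≤ 1}`. -/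
def alcove {n : ℕ} (τ : Equiv.Perm (Fin n)) : Set (Fin n → ℝ) :=
  {x | (∀ a b, τ a ≤ τ b → x a ≤ x b) ∧ ∀ a, 0 ≤ x a ∧ x a ≤ 1}

/-!
Testing `q + Δ_τ ⊆ Lip(P)` on the vertices of `Δ_τ` (the indicators of the upper sets of `τ`)
shows that it amounts to two local conditions: `q` vanishes on minimal elements, and
`q b - q a` is `1` or `0` along a cover `a ⋖ b` according as it is a descent of `τ` or not.
Integrating these along a saturated chain gives `q a = des(τ|_C)` for every chain `C` ending at
`a`, which forces descent-compatibility; conversely, since every element lies on a saturated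
chain (natural labeling), the chain values recover the local conditions.
-/

variable {n : ℕ}

section Alcove

variable {τ : Equiv.Perm (Fin n)}

lemma zero_mem_alcove : (0 : Fin n → ℝ) ∈ alcove τ :=
  ⟨fun _ _ _ => le_rfl, fun _ => ⟨le_rfl, zero_le_one⟩⟩

lemma one_mem_alcove : (1 : Fin n → ℝ) ∈ alcove τ :=
  ⟨fun _ _ _ => le_rfl, fun _ => ⟨zero_le_one, le_rfl⟩⟩

lemma indicator_lt_mem_alcove (t : Fin n) :
    (fun c => if τ t < τ c then (1 : ℝ) else 0) ∈ alcove τ := by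
  refine ⟨fun c d hcd => ?_, fun c => ?_⟩
  · by_cases h : τ t < τ c
    · simp [h, h.trans_le hcd]
    · simp only [h, if_false]; split_ifs <;> norm_num
  · dsimp only
    split_ifs <;> norm_num

lemma forall_alcove_add_mem_unit_iff (a : Fin n) (p : ℤ) :
    (∀ y ∈ alcove τ, 0 ≤ (p : ℝ) + y a ∧ (p : ℝ) + y a ≤ 1) ↔ p = 0 := by
  constructor
  · intro h
    have h₀ := h 0 zero_mem_alcove
    have h₁ := h 1 one_mem_alcove
    simp only [Pi.zero_apply, Pi.one_apply, add_zero] at h₀ h₁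
    exact_mod_cast le_antisymm (by linarith) h₀.1
  · rintro rfl y hy
    simpa using hy.2 a

lemma forall_alcove_sub_mem_unit_iff {a b : Fin n} (hab : a ≠ b) (p₀ p₁ : ℤ) :
    (∀ y ∈ alcove τ, 0 ≤ (p₁ + y b) - (p₀ + y a) ∧ (p₁ + y b) - (p₀ + y a) ≤ 1) ↔
      p₁ = p₀ + if τ b < τ a then 1 else 0 := by
  constructor
  · intro h
    have h₀ := h 0 zero_mem_alcove
    simp only [Pi.zero_apply, add_zero] at h₀
    rcases (τ.injective.ne hab).lt_or_gt with hlt | hgt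
    · have h₁ := h _ (indicator_lt_mem_alcove a)
      simp only [hlt, lt_irrefl, if_true, if_false] at h₁
      have : (p₁ : ℝ) = p₀ := le_antisymm (by linarith) (by linarith)
      simp only [hlt.not_gt, if_false, add_zero]
      exact_mod_cast this
    · have h₁ := h _ (indicator_lt_mem_alcove b)
      simp only [hgt, lt_irrefl, if_true, if_false] at h₁
      have : (p₁ : ℝ) = p₀ + 1 := le_antisymm (by linarith) (by linarith)
      simp only [hgt, if_true]
      exact_mod_cast this
  · rintro rfl y ⟨hmono, hbd⟩
    have ha := hbd a
    have hb := hbd b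
    split_ifs with hgt
    · have := hmono b a hgt.le
      push_cast
      constructor <;> linarith
    · have := hmono a b (not_lt.mp hgt)
      push_cast
      constructor <;> linarith

end Alcove

section Chains

variable {r : Fin n → Fin n → Prop} {k : ℕ}

lemma desAlong_zero (τ : Equiv.Perm (Fin n)) (c : Fin 1 → Fin n) : desAlong τ 0 c = 0 := by
  simp [desAlong]

lemma desAlong_succ (τ : Equiv.Perm (Fin n)) (c : Fin (k + 2) → Fin n) :
    desAlong τ (k + 1) c = desAlong τ k (Fin.init c) +
      if τ (c (Fin.last (k + 1))) < τ (c (Fin.last k).castSucc) then 1 else 0 := by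
  simp only [desAlong, Finset.card_filter, Fin.sum_univ_castSucc]
  rfl

lemma IsSatChain.snoc {c : Fin (k + 1) → Fin n} {a b : Fin n} (hc : IsSatChain r k c a)
    (hab : CovR r a b) : IsSatChain r (k + 1) (Fin.snoc c b) b := by
  obtain ⟨hmin, hcov, rfl⟩ := hc
  refine ⟨?_, Fin.lastCases ?_ fun i => ?_, Fin.snoc_last _ _⟩
  · simpa only [← Fin.castSucc_zero, Fin.snoc_castSucc] using hmin
  · simpa only [Fin.succ_last, Fin.snoc_last, Fin.snoc_castSucc] using hab
  · simpa only [Fin.succ_castSucc, Fin.snoc_castSucc] using hcov i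

lemma IsSatChain.init {c : Fin (k + 2) → Fin n} {a : Fin n} (hc : IsSatChain r (k + 1) c a) :
    IsSatChain r k (Fin.init c) (c (Fin.last k).castSucc) :=
  ⟨hc.1, fun i => by simpa only [Fin.init, Fin.succ_castSucc] using hc.2.1 i.castSucc, rfl⟩

lemma IsSatChain.covR_last {c : Fin (k + 2) → Fin n} {a : Fin n}
    (hc : IsSatChain r (k + 1) c a) : CovR r (c (Fin.last k).castSucc) a := by
  simpa only [Fin.succ_last, hc.2.2] using hc.2.1 (Fin.last k)

lemma exists_covR_of_not_minR (hnat : ∀ a b, r a b → a ≤ b) {a : Fin n} (ha : ¬MinR r a) :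
    ∃ b, CovR r b a := by
  classical
  simp only [MinR, not_forall] at ha
  obtain ⟨b₀, hb₀, hb₀a⟩ := ha
  set S := Finset.univ.filter fun c => r c a ∧ c ≠ a
  have hS : S.Nonempty := ⟨b₀, by simp [S, hb₀, hb₀a]⟩
  -- The largest label below `a` is covered by `a`: anything strictly between has a larger label.
  obtain ⟨hba, hne⟩ : r (S.max' hS) a ∧ S.max' hS ≠ a := by simpa [S] using S.max'_mem hS
  refine ⟨S.max' hS, hba, hne, fun c hbc hca => or_iff_not_imp_right.2 fun hc => ?_⟩
  exact le_antisymm (S.le_max' c (by simp [S, hca, hc])) (hnat _ _ hbc)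

lemma exists_isSatChain (hnat : ∀ a b, r a b → a ≤ b) (a : Fin n) :
    ∃ k, ∃ c : Fin (k + 1) → Fin n, IsSatChain r k c a := by
  induction a using WellFoundedLT.induction with
  | _ a ih =>
    by_cases ha : MinR r a
    · exact ⟨0, fun _ => a, ha, Fin.elim0, rfl⟩
    · obtain ⟨b, hba⟩ := exists_covR_of_not_minR hnat ha
      obtain ⟨k, c, hc⟩ := ih b (lt_of_le_of_ne (hnat _ _ hba.1) hba.2.1)
      exact ⟨k + 1, _, hc.snoc hba⟩

end Chains

section DescentLabeling

variable {r : Fin n → Fin n → Prop} {τ : Equiv.Perm (Fin n)} {q : Fin n → ℤ}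

def IsDescentLabeling (r : Fin n → Fin n → Prop) (τ : Equiv.Perm (Fin n)) (q : Fin n → ℤ) :
    Prop :=
  (∀ a, MinR r a → q a = 0) ∧ ∀ a b, CovR r a b → q b = q a + if τ b < τ a then 1 else 0

theorem add_alcove_subset_lipR_iff :
    {x : Fin n → ℝ | ∃ y ∈ alcove τ, x = fun a => (q a : ℝ) + y a} ⊆ LipR r ↔
      IsDescentLabeling r τ q := by
  constructor
  · intro h
    exact ⟨fun a ha => (forall_alcove_add_mem_unit_iff a _).1 fun y hy => (h ⟨y, hy, rfl⟩).1 a ha,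
      fun a b hab => (forall_alcove_sub_mem_unit_iff hab.2.1 _ _).1 fun y hy =>
        (h ⟨y, hy, rfl⟩).2 a b hab⟩
  · rintro ⟨hmin, hcov⟩ _ ⟨y, hy, rfl⟩
    exact ⟨fun a ha => (forall_alcove_add_mem_unit_iff a _).2 (hmin a ha) y hy,
      fun a b hab => (forall_alcove_sub_mem_unit_iff hab.2.1 _ _).2 (hcov a b hab) y hy⟩

theorem IsDescentLabeling.eq_desAlong (hq : IsDescentLabeling r τ q) :
    ∀ {k : ℕ} {c : Fin (k + 1) → Fin n} {a : Fin n},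
      IsSatChain r k c a → q a = desAlong τ k c
  | 0, c, a, ⟨hmin, _, hlast⟩ => by rw [desAlong_zero, ← hlast]; exact hq.1 _ hmin
  | k + 1, c, a, hc => by
    rw [hq.2 _ _ hc.covR_last, hq.eq_desAlong hc.init, desAlong_succ, hc.2.2]
    push_cast
    rfl

theorem isDescentLabeling_of_forall_eq_desAlong (hnat : ∀ a b, r a b → a ≤ b)
    (h : ∀ a k (c : Fin (k + 1) → Fin n), IsSatChain r k c a → q a = desAlong τ k c) :
    IsDescentLabeling r τ q := by
  refine ⟨fun a ha => by simpa [desAlong_zero] using h a 0 (fun _ => a) ⟨ha, Fin.elim0, rfl⟩,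
    fun a b hab => ?_⟩
  obtain ⟨k, c, hc⟩ := exists_isSatChain hnat a
  rw [h a k c hc, h b _ _ (hc.snoc hab), desAlong_succ, Fin.init_snoc, Fin.snoc_last,
    Fin.snoc_castSucc, hc.2.2]
  push_cast
  rfl

end DescentLabeling

theorem alcove_in_lip_iff_general {n : ℕ} (r : Fin n → Fin n → Prop)
    (hnat : ∀ a b, r a b → a ≤ b)
    (τ : Equiv.Perm (Fin n)) (q : Fin n → ℤ) :
    {x : Fin n → ℝ | ∃ y ∈ alcove τ, x = fun a => (q a : ℝ) + y a} ⊆ LipR r ↔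
      (DescentCompatible r τ ∧
        ∀ (a : Fin n) (k : ℕ) (c : Fin (k + 1) → Fin n),
          IsSatChain r k c a → q a = (desAlong τ k c : ℤ)) := by
  rw [add_alcove_subset_lipR_iff]
  refine ⟨fun hq => ⟨fun a k₁ k₂ c₁ c₂ h₁ h₂ => ?_, fun a k c => hq.eq_desAlong⟩,
    fun h => isDescentLabeling_of_forall_eq_desAlong hnat h.2⟩
  exact_mod_cast (hq.eq_desAlong h₁).symm.trans (hq.eq_desAlong h₂)

/-- For a naturally labeled poset `r` on `Fin n`, the alcove `q + Δ_τ` is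
contained in `Lip(P)` iff `τ` is descent-compatible with `P` and
`q a = des_{P,τ}(a)` for all `a`. -/
theorem alcove_in_lip_iff {n : ℕ} (r : Fin n → Fin n → Prop)
    (hrefl : ∀ a, r a a) (hantisymm : ∀ a b, r a b → r b a → a = b)
    (htrans : ∀ a b c, r a b → r b c → r a c)
    (hnat : ∀ a b, r a b → a ≤ b)
    (τ : Equiv.Perm (Fin n)) (q : Fin n → ℤ) :
    {x : Fin n → ℝ | ∃ y ∈ alcove τ, x = fun a => (q a : ℝ) + y a} ⊆ LipR r ↔
      (DescentCompatible r τ ∧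
        ∀ (a : Fin n) (k : ℕ) (c : Fin (k + 1) → Fin n),
          IsSatChain r k c a → q a = (desAlong τ k c : ℤ)) :=
  alcove_in_lip_iff_general r hnat τ q
end

section
/- Every full-dimensional alcoved polytope P ⊂ ℝ^n admits a unique point q₀ ∈ P minimizing every strictly positive linear functional simultaneously; consequently P ⊆ q₀ + ℝ^n_{≥0}. -/
/-!
Take `q₀ ∈ ℤⁿ` to be the corner of an alcove of `P` with minimal coordinate sum. An alcove
`p + Δ_τ` of `P` meeting the box `q₀ + (-∞, 1)ⁿ` has `p ≤ q₀`, so minimality forces `p = q₀`: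
near `q₀`, `P` lies in `q₀ + ℝⁿ_{≥0}`, and by convexity it lies there globally. Strictly
positive functionals are monotone, hence minimized at `q₀`, and two points with this
containment property dominate each other.
-/

open Filter Topology Set

/-- The translated alcove `q + Δ_τ` for `q ∈ ℤ^n`. -/
def alcoveT {n : ℕ} (τ : Equiv.Perm (Fin n)) (q : Fin n → ℤ) : Set (Fin n → ℝ) :=
  {x | ∃ y ∈ alcove τ, x = fun a => (q a : ℝ) + y a}

theorem monotone_of_map_pos {F α β : Type*} [AddCommGroup α] [PartialOrder α]
    [IsOrderedAddMonoid α] [AddCommGroup β] [PartialOrder β] [IsOrderedAddMonoid β]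
    [FunLike F α β] [AddMonoidHomClass F α β] (f : F) (hf : ∀ a, 0 ≤ a → a ≠ 0 → 0 < f a) :
    Monotone f := by
  refine (monotone_iff_map_nonneg f).2 fun a ha => ?_
  rcases eq_or_ne a 0 with rfl | ha₀
  · rw [map_zero]
  · exact (hf a ha ha₀).le

theorem Convex.le_of_eventually_le {E : Type*} [AddCommGroup E] [PartialOrder E]
    [IsOrderedAddMonoid E] [Module ℝ E] [PosSMulMono ℝ E] [PosSMulReflectLE ℝ E]
    [TopologicalSpace E] [IsTopologicalAddGroup E] [ContinuousSMul ℝ E] {S : Set E}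
    (hS : Convex ℝ S) {q x : E} (hq : q ∈ S) (hx : x ∈ S)
    (hloc : ∀ᶠ z in 𝓝 q, z ∈ S → q ≤ z) : q ≤ x := by
  have hline : Tendsto (AffineMap.lineMap q x) (𝓝[>] (0 : ℝ)) (𝓝 q) := by
    simpa using ((AffineMap.lineMap_continuous (R := ℝ)).tendsto 0).mono_left nhdsWithin_le_nhds
  obtain ⟨t, hqz, ht⟩ := ((hline.eventually hloc).and (Ioo_mem_nhdsGT one_pos)).exists
  have hz : AffineMap.lineMap q x t ∈ S := hS.lineMap_mem hq hx (Ioo_subset_Icc_self ht)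
  have hdir : 0 ≤ t • (x - q) := by
    rw [← vsub_eq_sub, ← AffineMap.lineMap_vsub_left, vsub_eq_sub]
    exact sub_nonneg.2 (hqz hz)
  exact sub_nonneg.1 ((smul_nonneg_iff_nonneg_of_pos_left ht.1).1 hdir)

section Alcove

variable {n : ℕ} {τ : Equiv.Perm (Fin n)}

theorem coe_mem_alcoveT (q : Fin n → ℤ) : (fun i => (q i : ℝ)) ∈ alcoveT τ q :=
  ⟨0, ⟨fun _ _ _ => le_rfl, fun _ => ⟨le_rfl, zero_le_one⟩⟩, by simp⟩

theorem coe_le_of_mem_alcoveT {q : Fin n → ℤ} {x : Fin n → ℝ} (hx : x ∈ alcoveT τ q)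
    (j : Fin n) : (q j : ℝ) ≤ x j := by
  obtain ⟨y, hy, rfl⟩ := hx
  simpa using (hy.2 j).1

theorem le_of_mem_alcoveT_of_lt_add_one {p q : Fin n → ℤ} {x : Fin n → ℝ}
    (hx : x ∈ alcoveT τ p) (hxq : ∀ j, x j < q j + 1) : p ≤ q := fun j =>
  Int.lt_add_one_iff.1 <| by exact_mod_cast (coe_le_of_mem_alcoveT hx j).trans_lt (hxq j)

end Alcove

theorem eventually_coe_le_of_sum_le {n : ℕ} {A : Finset ((Fin n → ℤ) × Equiv.Perm (Fin n))}
    {p₀ : (Fin n → ℤ) × Equiv.Perm (Fin n)} (hmin : ∀ p ∈ A, ∑ j, p₀.1 j ≤ ∑ j, p.1 j) :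
    ∀ᶠ z in 𝓝 (fun i => (p₀.1 i : ℝ)),
      z ∈ ⋃ p ∈ A, alcoveT p.2 p.1 → (fun i => (p₀.1 i : ℝ)) ≤ z := by
  have hnear : ∀ᶠ z in 𝓝 (fun i => (p₀.1 i : ℝ)), ∀ j, z j < (p₀.1 j : ℝ) + 1 :=
    eventually_all.2 fun j => (continuous_apply j).continuousAt.eventually
      (gt_mem_nhds (lt_add_one _))
  filter_upwards [hnear] with z hz hzS
  obtain ⟨p, hp, hzp⟩ := mem_iUnion₂.1 hzS
  have hle : p.1 ≤ p₀.1 := le_of_mem_alcoveT_of_lt_add_one hzp hz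
  have heq : ∀ j ∈ Finset.univ, p.1 j = p₀.1 j :=
    (Finset.sum_eq_sum_iff_of_le fun j _ => hle j).1
      (le_antisymm (Finset.sum_le_sum fun j _ => hle j) (hmin p hp))
  intro j
  simpa [heq j (Finset.mem_univ j)] using coe_le_of_mem_alcoveT hzp j

/-- Every full-dimensional alcoved polytope (a convex set that is the union of a
nonempty finite family of alcoves) has a unique point `q₀` minimizing every
strictly positive linear functional; consequently `S ⊆ q₀ + ℝ^n_{≥0}`. -/
theorem alcoved_polytope_min_point {n : ℕ} (S : Set (Fin n → ℝ))
    (hconv : Convex ℝ S)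
    (halc : ∃ A : Finset ((Fin n → ℤ) × Equiv.Perm (Fin n)),
      A.Nonempty ∧ S = ⋃ p ∈ A, alcoveT p.2 p.1) :
    ∃! q₀ : Fin n → ℝ, q₀ ∈ S ∧
      (∀ ℓ : (Fin n → ℝ) →ₗ[ℝ] ℝ,
        (∀ p : Fin n → ℝ, (∀ i, 0 ≤ p i) → p ≠ 0 → 0 < ℓ p) →
        ∀ x ∈ S, ℓ q₀ ≤ ℓ x) ∧
      S ⊆ {x | ∀ i, q₀ i ≤ x i} := by
  obtain ⟨A, hA, rfl⟩ := halc
  obtain ⟨p₀, hp₀, hmin⟩ := A.exists_min_image (fun p => ∑ j, p.1 j) hA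
  have hq₀ : (fun i => (p₀.1 i : ℝ)) ∈ ⋃ p ∈ A, alcoveT p.2 p.1 :=
    mem_biUnion hp₀ (coe_mem_alcoveT _)
  have hle : ∀ x ∈ ⋃ p ∈ A, alcoveT p.2 p.1, (fun i => (p₀.1 i : ℝ)) ≤ x := fun x hx =>
    hconv.le_of_eventually_le hq₀ hx (eventually_coe_le_of_sum_le hmin)
  refine ⟨_, ⟨hq₀, fun ℓ hℓ x hx => monotone_of_map_pos ℓ hℓ (hle x hx), hle⟩, ?_⟩
  rintro q ⟨hq, -, hqle⟩
  exact le_antisymm (hqle hq₀) (hle q hq)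
end

section
/- Let w = (1/(n+1))(1,2,...,n), τ ∈ S_n, and q ∈ ℤ^n_{≥0} (with q₀ := 0, τ⁻¹(0) := 0). The facet-defining inequalities of q + Δ_τ violated by w are exactly: for 0 ≤ i < n, the inequality x_{τ⁻¹(i)} ≤ x_{τ⁻¹(i+1)} when either (τ⁻¹(i) < τ⁻¹(i+1) and q_{τ⁻¹(i)} < q_{τ⁻¹(i+1)}) or (τ⁻¹(i) > τ⁻¹(i+1) and q_{τ⁻¹(i)} ≤ q_{τ⁻¹(i+1)}); the top inequality x_{τ⁻¹(n)} ≤ 1 of q + Δ_τ is never violated by w. -/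
/-- The coordinates of `w - q` arranged along `τ⁻¹`: position `0` is the phantom
coordinate `x₀ = 0`, and position `i ∈ {1,…,n}` carries
`(w - q)_{τ⁻¹(i)} = τ⁻¹(i)/(n+1) - q_{τ⁻¹(i)}`, where `w = (1/(n+1))(1,…,n)`. -/
noncomputable def wqVal (n : ℕ) (τ : Equiv.Perm (Fin n)) (q : Fin n → ℤ) : Fin (n + 1) → ℝ :=
  Fin.cases 0 fun j : Fin n =>
    (((τ.symm j : ℕ) : ℝ) + 1) / ((n : ℝ) + 1) - (q (τ.symm j) : ℝ)

/-- The label `τ⁻¹(i) ∈ {0,…,n}` at position `i`, with the convention `τ⁻¹(0) = 0`. -/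
def invLabel (n : ℕ) (τ : Equiv.Perm (Fin n)) : Fin (n + 1) → ℕ :=
  Fin.cases 0 fun j : Fin n => (τ.symm j : ℕ) + 1

/-- The value `q_{τ⁻¹(i)}` at position `i`, with the convention `q₀ = 0`. -/
def qLabel (n : ℕ) (τ : Equiv.Perm (Fin n)) (q : Fin n → ℤ) : Fin (n + 1) → ℤ :=
  Fin.cases 0 fun j : Fin n => q (τ.symm j)

/-!
Write `wqVal n τ q p = a_p / (n+1) - b_p` with the integer labels `a_p = invLabel n τ p ∈ {0,…,n}`
and `b_p = qLabel n τ q p`. Since distinct labels differ by a nonzero amount of absolute value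
less than `n+1`, comparing two such numbers is the lexicographic comparison of `(-b, a)`; this gives
the violated inequalities. The top inequality holds because `a_p < n+1` and `b_p ≥ 0`.
-/

open Function

section LexCompare

variable {K : Type*} [Field K] [LinearOrder K] [IsStrictOrderedRing K]

lemma lt_mul_intCast_iff {m x : K} {d : ℤ} (hx : x ≠ 0) (hxm : |x| < m) :
    x < m * d ↔ (0 < x ∧ 0 < d) ∨ (x < 0 ∧ 0 ≤ d) := by
  have hm : 0 < m := (abs_nonneg x).trans_lt hxm
  obtain ⟨hmx, hxm'⟩ := abs_lt.mp hxm
  rcases lt_trichotomy d 0 with hd | rfl | hd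
  · have : m * d ≤ -m := by
      have : (d : K) ≤ -1 := by exact_mod_cast Int.le_sub_one_of_lt hd
      nlinarith
    constructor
    · intro h; linarith
    · rintro (⟨-, h⟩ | ⟨-, h⟩) <;> omega
  · simp
  · have : m ≤ m * d := by
      have : (1 : K) ≤ d := by exact_mod_cast hd
      nlinarith
    simp only [hd, hd.le, and_true]
    exact iff_of_true (by linarith) (lt_or_gt_of_ne hx).symm

lemma div_sub_lt_div_sub_iff {m a a' : K} {b b' : ℤ} (ha : a ≠ a') (hm : |a' - a| < m) :
    a' / m - b' < a / m - b ↔ (a < a' ∧ b < b') ∨ (a' < a ∧ b ≤ b') := by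
  have hm0 : 0 < m := (abs_nonneg _).trans_lt hm
  have key : a' / m - b' < a / m - b ↔ a' - a < m * ((b' - b : ℤ) : K) := by
    rw [← sub_pos, ← sub_pos (a := m * _)]
    have : a / m - b - (a' / m - b') = (m * ((b' - b : ℤ) : K) - (a' - a)) / m := by
      push_cast
      field_simp
      ring
    rw [this, div_pos_iff_of_pos_right hm0]
  rw [key, lt_mul_intCast_iff (sub_ne_zero.mpr ha.symm) hm, sub_pos, sub_neg, sub_pos,
    sub_nonneg]

end LexCompare

section Labels

variable {n : ℕ} {τ : Equiv.Perm (Fin n)}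

lemma wqVal_eq (q : Fin n → ℤ) (p : Fin (n + 1)) :
    wqVal n τ q p = (invLabel n τ p : ℝ) / ((n : ℝ) + 1) - (qLabel n τ q p : ℝ) := by
  cases p using Fin.cases <;> simp [wqVal, invLabel, qLabel]

lemma invLabel_lt (p : Fin (n + 1)) : invLabel n τ p < n + 1 := by
  cases p using Fin.cases <;> simp [invLabel]

lemma invLabel_injective : Injective (invLabel n τ) := by
  intro a b h
  cases a using Fin.cases <;> cases b using Fin.cases <;> simp_all [invLabel, Fin.val_inj]

lemma qLabel_nonneg {q : Fin n → ℤ} (hq : ∀ i, 0 ≤ q i) (p : Fin (n + 1)) :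
    0 ≤ qLabel n τ q p := by
  cases p using Fin.cases
  · simp [qLabel]
  · exact hq _

lemma wqVal_lt_one {q : Fin n → ℤ} (hq : ∀ i, 0 ≤ q i) (p : Fin (n + 1)) :
    wqVal n τ q p < 1 := by
  have ha : (invLabel n τ p : ℝ) < n + 1 := by exact_mod_cast invLabel_lt p
  have hb : (0 : ℝ) ≤ qLabel n τ q p := by exact_mod_cast qLabel_nonneg hq p
  rw [wqVal_eq, sub_lt_iff_lt_add, div_lt_iff₀ (by positivity)]
  nlinarith

lemma wqVal_lt_wqVal_iff (q : Fin n → ℤ) {p p' : Fin (n + 1)} (hp : p ≠ p') :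
    wqVal n τ q p' < wqVal n τ q p ↔
      (invLabel n τ p < invLabel n τ p' ∧ qLabel n τ q p < qLabel n τ q p') ∨
        (invLabel n τ p' < invLabel n τ p ∧ qLabel n τ q p ≤ qLabel n τ q p') := by
  have hne : (invLabel n τ p : ℝ) ≠ invLabel n τ p' := by
    exact_mod_cast invLabel_injective.ne hp
  have hlt (r : Fin (n + 1)) : (invLabel n τ r : ℝ) < n + 1 := by exact_mod_cast invLabel_lt r
  have hdist : |(invLabel n τ p' : ℝ) - invLabel n τ p| < n + 1 :=
    abs_sub_lt_of_nonneg_of_lt (Nat.cast_nonneg _) (hlt p') (Nat.cast_nonneg _) (hlt p)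
  rw [wqVal_eq, wqVal_eq, div_sub_lt_div_sub_iff hne hdist]
  norm_cast

end Labels

/-- For `w = (1/(n+1))(1,…,n)` and `q ∈ ℤ^n_{≥0}`: the inequality
`x_{τ⁻¹(i)} ≤ x_{τ⁻¹(i+1)}` of `q + Δ_τ` is violated by `w` exactly when
(`τ⁻¹(i) < τ⁻¹(i+1)` and `q_{τ⁻¹(i)} < q_{τ⁻¹(i+1)}`) or
(`τ⁻¹(i) > τ⁻¹(i+1)` and `q_{τ⁻¹(i)} ≤ q_{τ⁻¹(i+1)}`);
and the top inequality `x_{τ⁻¹(n)} ≤ 1` is never violated by `w`. -/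
theorem halfopen_alcove_violations (n : ℕ) (τ : Equiv.Perm (Fin n))
    (q : Fin n → ℤ) (hq : ∀ i, 0 ≤ q i) :
    (∀ i : Fin n,
      (wqVal n τ q i.succ < wqVal n τ q i.castSucc ↔
        ((invLabel n τ i.castSucc < invLabel n τ i.succ ∧
            qLabel n τ q i.castSucc < qLabel n τ q i.succ) ∨
          (invLabel n τ i.succ < invLabel n τ i.castSucc ∧
            qLabel n τ q i.castSucc ≤ qLabel n τ q i.succ)))) ∧
    wqVal n τ q (Fin.last n) ≤ 1 :=
  ⟨fun i => wqVal_lt_wqVal_iff q Fin.castSucc_lt_succ.ne, (wqVal_lt_one hq _).le⟩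
end

section
/- Let P be the chain 1 < 2 < ... < n, τ ∈ S_n, and q^τ ∈ ℤ^n with q^τ_i equal to the number of descents in the word τ(1)τ(2)...τ(i) (with q^τ_0 = 0, counting a descent at position 0 if τ(1) > τ(0) fails, i.e., descents of 0τ(1)...τ(i)). Then for 0 ≤ i < n: (a) if τ⁻¹(i+1) < τ⁻¹(i) then q^τ_{τ⁻¹(i+1)} < q^τ_{τ⁻¹(i)}; (b) if τ⁻¹(i+1) > τ⁻¹(i) then q^τ_{τ⁻¹(i)} ≤ q^τ_{τ⁻¹(i+1)}, with equality if and only if τ⁻¹(i+1) = τ⁻¹(i) + 1. -/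
/-!
For `a ≤ b` we have `q_a ≤ q_b`, with equality exactly when the factor of the word between
positions `a` and `b` has no descent, i.e. is weakly increasing. The letters `i` and `i + 1` stand
at positions `τ⁻¹(i)` and `τ⁻¹(i+1)`. If `i + 1` comes first, the factor between them decreases
somewhere, so it has a descent. If `i` comes first, a weakly increasing factor from `i` to `i + 1`
has all its letters in `{i, i + 1}`; as the letters are distinct, there is none in between.
-/

/-- The word `0 τ(1) τ(2) ⋯ τ(n)`: position `0` carries the letter `0`, and
position `i ∈ {1,…,n}` carries the letter `τ(i) ∈ {1,…,n}`. -/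
def word (n : ℕ) (τ : Equiv.Perm (Fin n)) : Fin (n + 1) → ℕ :=
  Fin.cases 0 fun j : Fin n => (τ j : ℕ) + 1

/-- `qdes n τ m` is the number of descents in the word `0 τ(1) ⋯ τ(m)`. -/
def qdes (n : ℕ) (τ : Equiv.Perm (Fin n)) (m : ℕ) : ℕ :=
  (Finset.univ.filter fun j : Fin n =>
    (j : ℕ) + 1 ≤ m ∧ word n τ j.succ < word n τ j.castSucc).card

section DescentCount

variable {α : Type*} [LinearOrder α] {n : ℕ} (w : Fin (n + 1) → α)

def descentsBefore (m : ℕ) : Finset (Fin n) :=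
  Finset.univ.filter fun j : Fin n => (j : ℕ) + 1 ≤ m ∧ w j.succ < w j.castSucc

def descentCount (m : ℕ) : ℕ := (descentsBefore w m).card

@[simp]
lemma mem_descentsBefore {m : ℕ} {j : Fin n} :
    j ∈ descentsBefore w m ↔ (j : ℕ) + 1 ≤ m ∧ w j.succ < w j.castSucc := by
  simp [descentsBefore]

lemma descentsBefore_mono : Monotone (descentsBefore w) :=
  fun _ _ hab _ hj => by
    rw [mem_descentsBefore] at hj ⊢
    exact ⟨hj.1.trans hab, hj.2⟩

lemma descentCount_mono : Monotone (descentCount w) :=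
  fun _ _ hab => Finset.card_le_card (descentsBefore_mono w hab)

lemma descentCount_eq_iff {a b : ℕ} (hab : a ≤ b) :
    descentCount w a = descentCount w b ↔
      ∀ j : Fin n, a ≤ j → (j : ℕ) + 1 ≤ b → w j.castSucc ≤ w j.succ := by
  have hsub := descentsBefore_mono w hab
  constructor
  · intro h j haj hjb
    by_contra! hdesc
    have hj : j ∈ descentsBefore w b := (mem_descentsBefore w).mpr ⟨hjb, hdesc⟩
    rw [← Finset.eq_of_subset_of_card_le hsub h.ge, mem_descentsBefore] at hj
    omega
  · intro h
    refine congrArg Finset.card (hsub.antisymm fun j hj => ?_)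
    rw [mem_descentsBefore] at hj ⊢
    refine ⟨?_, hj.2⟩
    by_contra! hja
    exact (h j (by omega) hj.1).not_gt hj.2

lemma monotoneOn_of_descentCount_eq {a b : ℕ} (hab : a ≤ b)
    (h : descentCount w a = descentCount w b) : MonotoneOn w (Fin.val ⁻¹' Set.Icc a b) := by
  refine monotoneOn_of_le_succ (Set.ordConnected_Icc.preimage_mono Fin.val_strictMono.monotone) ?_
  intro x hx hxs hsxs
  obtain ⟨j, rfl⟩ := Fin.exists_castSucc_eq.mpr
    (show x ≠ Fin.last n by rintro rfl; exact hx fun _ _ => Fin.le_last _)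
  rw [Fin.orderSucc_castSucc] at hsxs ⊢
  exact (descentCount_eq_iff w hab).mp h j hxs.1 hsxs.2

end DescentCount

lemma val_eq_succ_of_monotoneOn {n : ℕ} {w : Fin (n + 1) → ℕ} (hw : Function.Injective w)
    {p q : Fin (n + 1)} (hpq : p < q) (hmono : MonotoneOn w (Fin.val ⁻¹' Set.Icc p q))
    (hwq : w q = w p + 1) : (q : ℕ) = p + 1 := by
  by_contra hne
  have hpq' : (p : ℕ) + 1 < q := by omega
  let r : Fin (n + 1) := ⟨p + 1, by omega⟩
  have hr : (r : ℕ) = p + 1 := rfl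
  have hpr : w p ≤ w r :=
    hmono ⟨le_rfl, hpq.le⟩ ⟨by omega, by omega⟩ (Fin.le_def.mpr (by omega))
  have hrq : w r ≤ w q :=
    hmono ⟨by omega, by omega⟩ ⟨hpq.le, le_rfl⟩ (Fin.le_def.mpr (by omega))
  rcases (show w r = w p ∨ w r = w q by omega) with h | h <;>
  · have := hw h
    omega

section Permutation

variable {n : ℕ} (τ : Equiv.Perm (Fin n))

lemma qdes_eq_descentCount : qdes n τ = descentCount (word n τ) := rfl

lemma word_injective : Function.Injective (word n τ) := by
  intro p q h
  induction p using Fin.cases with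
  | zero => induction q using Fin.cases <;> simp_all [word]
  | succ p =>
    induction q using Fin.cases with
    | zero => simp [word] at h
    | succ q => simpa [word, Fin.val_eq_val, τ.injective.eq_iff] using h

lemma exists_word_eq_of_invLabel (v : Fin (n + 1)) :
    ∃ p : Fin (n + 1), (p : ℕ) = invLabel n τ v ∧ word n τ p = v := by
  induction v using Fin.cases with
  | zero => exact ⟨0, rfl, rfl⟩
  | succ j => exact ⟨(τ.symm j).succ, rfl, by simp [word]⟩

end Permutation

/-- On the chain `1 < ⋯ < n` with `q^τ_i` the number of descents of
`0 τ(1) ⋯ τ(i)`, for `0 ≤ i < n`: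
(a) if `τ⁻¹(i+1) < τ⁻¹(i)` then `q^τ_{τ⁻¹(i+1)} < q^τ_{τ⁻¹(i)}`;
(b) if `τ⁻¹(i) < τ⁻¹(i+1)` then `q^τ_{τ⁻¹(i)} ≤ q^τ_{τ⁻¹(i+1)}`, with equality
iff `τ⁻¹(i+1) = τ⁻¹(i) + 1`. -/
theorem chain_descent_statistics (n : ℕ) (τ : Equiv.Perm (Fin n)) :
    ∀ i : Fin n,
      (invLabel n τ i.succ < invLabel n τ i.castSucc →
        qdes n τ (invLabel n τ i.succ) < qdes n τ (invLabel n τ i.castSucc)) ∧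
      (invLabel n τ i.castSucc < invLabel n τ i.succ →
        (qdes n τ (invLabel n τ i.castSucc) ≤ qdes n τ (invLabel n τ i.succ) ∧
          (qdes n τ (invLabel n τ i.castSucc) = qdes n τ (invLabel n τ i.succ) ↔
            invLabel n τ i.succ = invLabel n τ i.castSucc + 1))) := by
  intro i
  obtain ⟨p, hp, hwp⟩ := exists_word_eq_of_invLabel τ i.castSucc
  obtain ⟨q, hq, hwq⟩ := exists_word_eq_of_invLabel τ i.succ
  rw [Fin.val_castSucc] at hwp
  rw [Fin.val_succ] at hwq
  rw [← hp, ← hq, qdes_eq_descentCount]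
  refine ⟨fun hqp => ?_,
    fun hpq => ⟨descentCount_mono (word n τ) hpq.le, fun h => ?_, fun h => ?_⟩⟩
  · refine (descentCount_mono (word n τ) hqp.le).lt_of_ne fun h => ?_
    have hle : word n τ q ≤ word n τ p :=
      monotoneOn_of_descentCount_eq (word n τ) hqp.le h ⟨le_rfl, hqp.le⟩ ⟨hqp.le, le_rfl⟩ hqp.le
    omega
  · exact val_eq_succ_of_monotoneOn (word_injective τ) hpq
      (monotoneOn_of_descentCount_eq (word n τ) hpq.le h) (by omega)
  · refine (descentCount_eq_iff (word n τ) hpq.le).mpr fun j hpj hjq => ?_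
    rw [show j.castSucc = p from Fin.ext (by rw [Fin.val_castSucc]; omega),
      show j.succ = q from Fin.ext (by rw [Fin.val_succ]; omega)]
    omega
end

section
/- If P is a poset such that P̂ is ranked with rank function ρ, then Lip(P) is centrally symmetric with respect to ρ: ρ - Lip(P) = Lip(P). -/
open Set

theorem Function.Involutive.image_eq_of_mapsTo {β : Type*} {φ : β → β} {s : Set β}
    (hφ : φ.Involutive) (h : MapsTo φ s s) : φ '' s = s :=
  h.image_subset.antisymm (LeftInvOn.surjOn (fun x _ => hφ x) h)

theorem rank_sub_mem_Lip {α : Type*} [PartialOrder α] {ρ : α → ℝ}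
    (hmin : ∀ a, IsMin a → ρ a = 1) (hcov : ∀ a b : α, a ⋖ b → ρ b = ρ a + 1)
    {f : α → ℝ} (hf : f ∈ Lip α) : ρ - f ∈ Lip α := by
  obtain ⟨hf_min, hf_cov⟩ := hf
  refine ⟨fun a ha => ?_, fun a b hab => ?_⟩
  · obtain ⟨h₀, h₁⟩ := hf_min a ha
    simp only [Pi.sub_apply, hmin a ha]
    constructor <;> linarith
  · obtain ⟨h₀, h₁⟩ := hf_cov a b hab
    simp only [Pi.sub_apply, hcov a b hab]
    constructor <;> linarith

theorem lip_centrally_symmetric_general {α : Type*} [PartialOrder α]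
    (ρ : α → ℕ) (hmin : ∀ a : α, IsMin a → ρ a = 1)
    (hcov : ∀ a b : α, a ⋖ b → ρ b = ρ a + 1) :
    (fun f : α → ℝ => fun a => (ρ a : ℝ) - f a) '' Lip α = Lip α := by
  have hmin' : ∀ a, IsMin a → (ρ a : ℝ) = 1 := fun a ha => by exact_mod_cast hmin a ha
  have hcov' : ∀ a b : α, a ⋖ b → (ρ b : ℝ) = ρ a + 1 := fun a b hab => by
    exact_mod_cast hcov a b hab
  refine Function.Involutive.image_eq_of_mapsTo (fun f => ?_)
    (fun f hf => rank_sub_mem_Lip hmin' hcov' hf)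
  funext a
  exact sub_sub_cancel _ _

/-- If `P̂` is ranked with rank function `ρ` (so `ρ a = 1` for minimal `a` and
`ρ b = ρ a + 1` for covers `a ⋖ b`), then `Lip(P)` is centrally symmetric with
respect to `ρ`: `ρ - Lip(P) = Lip(P)`. -/
theorem lip_centrally_symmetric {α : Type*} [PartialOrder α] [Fintype α]
    (ρ : α → ℕ) (hmin : ∀ a : α, IsMin a → ρ a = 1)
    (hcov : ∀ a b : α, a ⋖ b → ρ b = ρ a + 1) :
    (fun f : α → ℝ => fun a => (ρ a : ℝ) - f a) '' Lip α = Lip α :=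
  lip_centrally_symmetric_general ρ hmin hcov
end

section
/- If P is a poset such that P̂ is ranked with rank function ρ, then the rank function ρ (restricted to P) is the unique integer point in the interior of 2·Lip(P). -/
open Pointwise
/-! The interior of `2 • Lip α` is cut out by the strict inequalities `0 < f a < 2` on minimal
elements and `0 < f b - f a < 2` on covers, because each constraint is the preimage of an
interval under a surjective continuous linear functional, hence an open map, and there are
finitely many of them. An integer point there takes the value `1` on minimal elements and
increases by exactly `1` along covers, which pins it down by well-founded induction. -/

open Set

namespace ContinuousLinearMap

variable {R α : Type*} [Ring R] [TopologicalSpace R] [IsTopologicalAddGroup R]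

def projSub (a b : α) : (α → R) →L[R] R :=
  proj (R := R) (φ := fun _ => R) b - proj a

@[simp]
theorem projSub_apply (a b : α) (f : α → R) : projSub a b f = f b - f a := rfl

theorem projSub_surjective {a b : α} (h : a ≠ b) :
    Function.Surjective (projSub (R := R) a b) := by
  classical
  exact fun x => ⟨Pi.single b x, by simp [h]⟩

end ContinuousLinearMap

/-- `lipSet α (Icc 0 c) = c • Lip α`, and `lipSet α {1}` is the set of rank functions. -/
def lipSet (α : Type*) [PartialOrder α] (I : Set ℝ) : Set (α → ℝ) :=
  {f | (∀ a, IsMin a → f a ∈ I) ∧ ∀ a b : α, a ⋖ b → f b - f a ∈ I}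

theorem Int.cast_eq_one_of_mem_Ioo {R : Type*} [Ring R] [LinearOrder R] [IsStrictOrderedRing R]
    {z : ℤ} (h : (z : R) ∈ Ioo 0 2) : (z : R) = 1 := by
  obtain ⟨h0, h2⟩ := h
  have h0 : 0 < z := by exact_mod_cast h0
  have h2 : z < 2 := by exact_mod_cast h2
  simp [show z = 1 by omega]

theorem lip_eq_lipSet {α : Type*} [PartialOrder α] : Lip α = lipSet α (Icc 0 1) := rfl

namespace lipSet

variable {α : Type*} [PartialOrder α]

theorem mono {I J : Set ℝ} (h : I ⊆ J) : lipSet α I ⊆ lipSet α J :=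
  fun _ hf => ⟨fun a ha => h (hf.1 a ha), fun a b hab => h (hf.2 a b hab)⟩

theorem smul {c : ℝ} (hc : c ≠ 0) (I : Set ℝ) : c • lipSet α I = lipSet α (c • I) := by
  ext f
  simp only [mem_smul_set_iff_inv_smul_mem₀ hc, lipSet, mem_ofPred_eq, Pi.smul_apply,
    ← smul_sub]

theorem eq_iInter (I : Set ℝ) :
    lipSet α I = (⋂ a, ⋂ (_ : IsMin a), Function.eval a ⁻¹' I) ∩
      ⋂ a, ⋂ b, ⋂ (_ : a ⋖ b), ContinuousLinearMap.projSub (R := ℝ) a b ⁻¹' I := by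
  ext f
  simp [lipSet]

theorem interior_eq [Finite α] (I : Set ℝ) : interior (lipSet α I) = lipSet α (interior I) := by
  cases nonempty_fintype α
  simp only [eq_iInter, interior_inter, interior_iInter_of_finite,
    ← (isOpenMap_eval _).preimage_interior_eq_interior_preimage (continuous_apply _)]
  refine congrArg _ (iInter₂_congr fun a b => iInter_congr fun hab => ?_)
  exact ContinuousLinearMap.interior_preimage _ (ContinuousLinearMap.projSub_surjective hab.ne) _

theorem mem_one_of_forall_intCast {f : α → ℝ} (hf : f ∈ lipSet α (Ioo 0 2))
    (hz : ∀ a, ∃ z : ℤ, f a = z) : f ∈ lipSet α {1} := by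
  refine ⟨fun a ha => ?_, fun a b hab => ?_⟩
  · obtain ⟨z, hz⟩ := hz a
    exact hz ▸ Int.cast_eq_one_of_mem_Ioo (hz ▸ hf.1 a ha)
  · obtain ⟨za, hza⟩ := hz a
    obtain ⟨zb, hzb⟩ := hz b
    have hdiff : f b - f a = ((zb - za : ℤ) : ℝ) := by push_cast; rw [hza, hzb]
    exact hdiff ▸ Int.cast_eq_one_of_mem_Ioo (hdiff ▸ hf.2 a b hab)

theorem subsingleton_one [WellFoundedLT α] [IsStronglyCoatomic α] :
    (lipSet α {1}).Subsingleton := by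
  intro f hf g hg
  funext a
  induction a using WellFoundedLT.induction with
  | _ a ih =>
    by_cases ha : IsMin a
    · exact (hf.1 a ha).trans (hg.1 a ha).symm
    · obtain ⟨b, hba⟩ := not_isMin_iff.mp ha
      obtain ⟨c, -, hca⟩ := exists_le_covBy_of_lt hba
      have hfc : f a - f c = 1 := hf.2 c a hca
      have hgc : g a - g c = 1 := hg.2 c a hca
      linarith [ih c hca.lt]

end lipSet

/-- If `P̂` is ranked with rank function `ρ`, then `ρ` is the unique integer
point in the interior of `2 · Lip(P)`. -/
theorem rank_unique_interior_point {α : Type*} [PartialOrder α] [Fintype α]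
    (ρ : α → ℕ) (hmin : ∀ a : α, IsMin a → ρ a = 1)
    (hcov : ∀ a b : α, a ⋖ b → ρ b = ρ a + 1) :
    (fun a => (ρ a : ℝ)) ∈ interior ((2 : ℝ) • Lip α) ∧
    ∀ g ∈ interior ((2 : ℝ) • Lip α),
      (∀ a, ∃ z : ℤ, g a = (z : ℝ)) → g = fun a => (ρ a : ℝ) := by
  have hρ : (fun a => (ρ a : ℝ)) ∈ lipSet α {1} :=
    ⟨fun a ha => by simp [hmin a ha], fun a b hab => by simp [hcov a b hab]⟩
  have hint : interior ((2 : ℝ) • Lip α) = lipSet α (Ioo 0 2) := by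
    rw [lip_eq_lipSet, lipSet.smul two_ne_zero, LinearOrderedField.smul_Icc two_pos,
      lipSet.interior_eq, interior_Icc, mul_zero, mul_one]
  rw [hint]
  refine ⟨lipSet.mono (by norm_num) hρ, fun g hg hz => ?_⟩
  exact lipSet.subsingleton_one (lipSet.mem_one_of_forall_intCast hg hz) hρ
end

section
/- Let P be a poset such that P̂ is ranked with rank function ρ. Then Lip(P) = K(P) ∩ (ρ - K(P)), where K(P) is the order cone of nonnegative isotone functions on P. -/
/-- The order cone of nonnegative isotone functions on `α`. -/
def orderCone (α : Type*) [PartialOrder α] : Set (α → ℝ) :=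
  {f | (∀ a, 0 ≤ f a) ∧ ∀ a b : α, a ≤ b → f a ≤ f b}

theorem Monotone.forall_le_of_forall_isMin_le {α β : Type*} [Preorder α] [WellFoundedLT α]
    [Preorder β] {f : α → β} (hf : Monotone f) {c : β} (h : ∀ a, IsMin a → c ≤ f a) (a : α) :
    c ≤ f a := by
  obtain ⟨b, hba, hb⟩ := exists_minimal_le_of_wellFoundedLT (fun _ ↦ True) a trivial
  exact (h b (minimal_true.mp hb)).trans (hf hba)

section

variable {α : Type*} [PartialOrder α]

theorem mem_orderCone_iff_covBy [LocallyFiniteOrder α] [WellFoundedLT α] {f : α → ℝ} :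
    f ∈ orderCone α ↔ (∀ a, IsMin a → 0 ≤ f a) ∧ ∀ a b : α, a ⋖ b → f a ≤ f b := by
  refine ⟨fun ⟨hnonneg, hmono⟩ ↦ ⟨fun a _ ↦ hnonneg a, fun a b hab ↦ hmono a b hab.le⟩, ?_⟩
  rintro ⟨hmin, hcov⟩
  have hf : Monotone f := (monotone_iff_forall_covBy f).2 hcov
  exact ⟨hf.forall_le_of_forall_isMin_le hmin, fun a b hab ↦ hf hab⟩

theorem mem_Lip_iff {f : α → ℝ} :
    f ∈ Lip α ↔ ((∀ a, IsMin a → 0 ≤ f a) ∧ ∀ a b : α, a ⋖ b → f a ≤ f b) ∧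
      ((∀ a, IsMin a → f a ≤ 1) ∧ ∀ a b : α, a ⋖ b → f b - f a ≤ 1) := by
  simp only [Lip, Set.mem_ofPred_eq, sub_nonneg, imp_and, forall_and]
  tauto

theorem sub_mem_orderCone_iff_covBy [LocallyFiniteOrder α] [WellFoundedLT α] {ρ : α → ℕ}
    (hmin : ∀ a : α, IsMin a → ρ a = 1) (hcov : ∀ a b : α, a ⋖ b → ρ b = ρ a + 1)
    {f : α → ℝ} :
    (fun a ↦ (ρ a : ℝ) - f a) ∈ orderCone α ↔
      (∀ a, IsMin a → f a ≤ 1) ∧ ∀ a b : α, a ⋖ b → f b - f a ≤ 1 := by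
  rw [mem_orderCone_iff_covBy]
  refine and_congr (forall₂_congr fun a ha ↦ ?_) (forall₃_congr fun a b hab ↦ ?_)
  · rw [hmin a ha]
    push_cast
    constructor <;> intro <;> linarith
  · rw [hcov a b hab]
    push_cast
    constructor <;> intro <;> linarith

end

theorem mem_image_sub_iff {α : Type*} (r f : α → ℝ) (S : Set (α → ℝ)) :
    f ∈ (fun g : α → ℝ ↦ fun a ↦ r a - g a) '' S ↔ (fun a ↦ r a - f a) ∈ S := by
  have hinv : Function.Involutive fun g : α → ℝ ↦ fun a ↦ r a - g a := fun g ↦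
    funext fun a ↦ sub_sub_cancel (r a) (g a)
  rw [hinv.image_eq_preimage_symm, Set.mem_preimage]

/-- If `P̂` is ranked with rank function `ρ`, then `Lip(P) = K(P) ∩ (ρ - K(P))`. -/
theorem lip_eq_cone_inter_reflected_cone {α : Type*} [PartialOrder α] [Fintype α]
    (ρ : α → ℕ) (hmin : ∀ a : α, IsMin a → ρ a = 1)
    (hcov : ∀ a b : α, a ⋖ b → ρ b = ρ a + 1) :
    Lip α = orderCone α ∩
      ((fun g : α → ℝ => fun a => (ρ a : ℝ) - g a) '' orderCone α) := by
  classical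
  let := Fintype.toLocallyFiniteOrder (α := α)
  ext f
  rw [Set.mem_inter_iff, mem_image_sub_iff, mem_Lip_iff, mem_orderCone_iff_covBy,
    sub_mem_orderCone_iff_covBy hmin hcov]
end

section
/- Let P be a poset with unique maximal element 1̂ such that P̂ is ranked with rank function ρ, and let h = height(P) be the number of elements of a maximal chain of P. Then for 1 ≤ k ≤ h, the map f ↦ ρ - f is an affine lattice isomorphism from the (P,k)-hypersimplex Δ(P,k) onto Δ(P, h+1-k). -/
/-- The `(P,k)`-hypersimplex `Δ(P,k) = {f ∈ Lip(P) : k - 1 ≤ f(1̂) ≤ k}`,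
where `m = 1̂` is the maximum of `P`. -/
def hyp (α : Type*) [PartialOrder α] (m : α) (k : ℕ) : Set (α → ℝ) :=
  {f ∈ Lip α | (k : ℝ) - 1 ≤ f m ∧ f m ≤ (k : ℝ)}

lemma rank_sub_involutive {α : Type*} (ρ : α → ℕ) :
    Function.Involutive (fun f : α → ℝ => fun a => (ρ a : ℝ) - f a) := by
  intro f
  funext a
  ring

section RankReflection

variable {α : Type*} [PartialOrder α] {ρ : α → ℕ}

/-- Since `ρ` is `1` on minimal elements and grows by `1` along covers, `ρ - f` satisfies each
defining inequality of `Lip` exactly when `f` satisfies the opposite one. -/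
lemma rank_sub_mem_lip (hmin : ∀ a : α, IsMin a → ρ a = 1)
    (hcov : ∀ a b : α, a ⋖ b → ρ b = ρ a + 1) {f : α → ℝ} (hf : f ∈ Lip α) :
    (fun a => (ρ a : ℝ) - f a) ∈ Lip α := by
  obtain ⟨hf_min, hf_cov⟩ := hf
  refine ⟨fun a ha => ?_, fun a b hab => ?_⟩
  · obtain ⟨h0, h1⟩ := hf_min a ha
    dsimp only
    rw [hmin a ha, Nat.cast_one]
    constructor <;> linarith
  · obtain ⟨h0, h1⟩ := hf_cov a b hab
    dsimp only
    rw [hcov a b hab, Nat.cast_add_one]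
    constructor <;> linarith

lemma mapsTo_hyp_rank_sub (hmin : ∀ a : α, IsMin a → ρ a = 1)
    (hcov : ∀ a b : α, a ⋖ b → ρ b = ρ a + 1) (m : α) {k : ℕ} (hk : k ≤ ρ m + 1) :
    Set.MapsTo (fun f : α → ℝ => fun a => (ρ a : ℝ) - f a)
      (hyp α m k) (hyp α m (ρ m + 1 - k)) := by
  rintro f ⟨hf, hk_le, hle_k⟩
  have hcast : ((ρ m + 1 - k : ℕ) : ℝ) = ρ m + 1 - k := by push_cast [Nat.cast_sub hk]; ring
  refine ⟨rank_sub_mem_lip hmin hcov hf, ?_, ?_⟩ <;> simp only [hcast] <;> linarith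

end RankReflection

theorem hypersimplex_symmetry_general {α : Type*} [PartialOrder α]
    (ρ : α → ℕ) (hmin : ∀ a : α, IsMin a → ρ a = 1)
    (hcov : ∀ a b : α, a ⋖ b → ρ b = ρ a + 1)
    (m : α)
    (k : ℕ) (hk2 : k ≤ ρ m) :
    Set.BijOn (fun f : α → ℝ => fun a => (ρ a : ℝ) - f a)
      (hyp α m k) (hyp α m (ρ m + 1 - k)) ∧
    ∀ f : α → ℝ, (∀ a, ∃ z : ℤ, f a = (z : ℝ)) →
      ∀ a, ∃ z : ℤ, (ρ a : ℝ) - f a = (z : ℝ) := by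
  have hk : k ≤ ρ m + 1 := by omega
  have hinv := rank_sub_involutive ρ
  refine ⟨Set.InvOn.bijOn ⟨fun f _ => hinv f, fun f _ => hinv f⟩
    (mapsTo_hyp_rank_sub hmin hcov m hk) ?_, ?_⟩
  · have hback := mapsTo_hyp_rank_sub hmin hcov m (Nat.sub_le (ρ m + 1) k)
    rwa [Nat.sub_sub_self hk] at hback
  · intro f hf a
    obtain ⟨z, hz⟩ := hf a
    exact ⟨ρ a - z, by push_cast [hz]; ring⟩

/-- If `P` has maximum `1̂ = m` and `P̂` is ranked with rank function `ρ` (so the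
height of `P` is `ρ m`), then for `1 ≤ k ≤ ρ m` the affine map `f ↦ ρ - f` is a
lattice-preserving bijection from `Δ(P,k)` onto `Δ(P, height(P) + 1 - k)`. -/
theorem hypersimplex_symmetry {α : Type*} [PartialOrder α] [Fintype α]
    (ρ : α → ℕ) (hmin : ∀ a : α, IsMin a → ρ a = 1)
    (hcov : ∀ a b : α, a ⋖ b → ρ b = ρ a + 1)
    (m : α) (hm : ∀ a : α, a ≤ m)
    (k : ℕ) (hk1 : 1 ≤ k) (hk2 : k ≤ ρ m) :
    Set.BijOn (fun f : α → ℝ => fun a => (ρ a : ℝ) - f a)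
      (hyp α m k) (hyp α m (ρ m + 1 - k)) ∧
    ∀ f : α → ℝ, (∀ a, ∃ z : ℤ, f a = (z : ℝ)) →
      ∀ a, ∃ z : ℤ, (ρ a : ℝ) - f a = (z : ℝ) :=
  hypersimplex_symmetry_general ρ hmin hcov m k hk2
end
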